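/- arXiv:2109.01077 — 4 statements merged into one kernel-verified Lean document; each statement's English description precedes it below -/
import Mathlib

section
/- Take τ ∈ (0,1) and (β,γ,κ,υ,C_S,C_App) ∈ (0,1] × (0,∞)² × (0,1) × [1,∞)². Let P ∈ 𝒫_Höl(β,C_S) ∩ 𝒫_App(𝒜_rect,τ,κ,γ,C_App) be a distribution on ℝ^d × [0,1] with regression function η and Lebesgue-absolutely-continuous marginal μ having continuous density f_μ. Suppose that 𝒳_τ(η) ⊆ ℛ_υ(μ), that μ(η^{-1}((τ,1])) > 0 and that η^{-1}({τ}) ≠ ∅. Then βγ(κ−1) ≤ dκ. -/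
open MeasureTheory ProbabilityTheory Set Matrix
open scoped ENNReal NNReal BigOperators Classical

noncomputable section

abbrev Rd (d : ℕ) : Type := Fin d → ℝ
abbrev Sample (d : ℕ) : Type := Rd d × ℝ

/-- Super-level set of a function at level `τ`. -/
def superLevel {d : ℕ} (η : Rd d → ℝ) (τ : ℝ) : Set (Rd d) := {x | τ ≤ η x}

/-- A regression model: a Borel probability distribution `P` of a pair `(X,Y)` on
`ℝ^d × [0,1]`, together with its continuous regression function `η (x) = E (Y | X = x)`. -/
structure RegModel (d : ℕ) where
  P : Measure (Sample d)
  isProb : IsProbabilityMeasure P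
  ySupp : P {p : Sample d | p.2 ∈ Set.Icc (0:ℝ) 1} = 1
  η : Rd d → ℝ
  η_cont : Continuous η
  η_mem : ∀ x, η x ∈ Set.Icc (0:ℝ) 1
  is_reg : ∀ s : Set (Rd d), MeasurableSet s →
    (∫ p in {p : Sample d | p.1 ∈ s}, p.2 ∂P) = ∫ x in s, η x ∂(P.map Prod.fst)

/-- Marginal distribution `μ` of `X` on `ℝ^d`. -/
def RegModel.μm {d : ℕ} (Q : RegModel d) : Measure (Rd d) := Q.P.map Prod.fst

/-- The distribution of an i.i.d. sample of size `n`. -/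
def ProdP {d : ℕ} (n : ℕ) (Q : RegModel d) : Measure (Fin n → Sample d) :=
  Measure.pi fun _ => Q.P

/-- `M_τ (P, 𝒜) = sup {μ(A) : A ∈ 𝒜, A ⊆ 𝒳_τ(η)}`. -/
def Mtau {d : ℕ} (Q : RegModel d) (As : Set (Set (Rd d))) (τ : ℝ) : ℝ :=
  sSup ((fun A => (Q.μm A).toReal) '' {A | A ∈ As ∧ A ⊆ superLevel Q.η τ})

/-- A data-dependent selection set taking values in the class `As`. -/
structure SelSet (d n : ℕ) (As : Set (Set (Rd d))) where
  f : (Fin n → Sample d) → Set (Rd d)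
  mem_cl : ∀ D, f D ∈ As
  meas : MeasurableSet {p : Rd d × (Fin n → Sample d) | p.1 ∈ f p.2}

/-- Type I error control at level `α` over the family `Ps`. -/
def TypeIOK {d n : ℕ} {As : Set (Set (Rd d))} (τ α : ℝ)
    (Ps : Set (RegModel d)) (Ahat : SelSet d n As) : Prop :=
  ∀ Q ∈ Ps, ENNReal.ofReal (1 - α) ≤ ProdP n Q {D | Ahat.f D ⊆ superLevel Q.η τ}

/-- The regret `R_τ(Â) = M_τ - E[μ(Â(𝒟)) | Â(𝒟) ⊆ 𝒳_τ(η)]`, for a plain map. -/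
def regretRaw {d n : ℕ} (Q : RegModel d) (As : Set (Set (Rd d))) (τ : ℝ)
    (Af : (Fin n → Sample d) → Set (Rd d)) : ℝ :=
  Mtau Q As τ -
    (∫ D in {D | Af D ⊆ superLevel Q.η τ}, (Q.μm (Af D)).toReal ∂(ProdP n Q)) /
      (ProdP n Q {D | Af D ⊆ superLevel Q.η τ}).toReal

/-- The regret of a data-dependent selection set. -/
def regret {d n : ℕ} {As : Set (Set (Rd d))} (Q : RegModel d) (τ : ℝ)
    (Ahat : SelSet d n As) : ℝ :=
  regretRaw Q As τ Ahat.f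

/-- `log₊ x = log x` if `x ≥ e`, and `1` otherwise. -/
def logPlus (x : ℝ) : ℝ := if Real.exp 1 ≤ x then Real.log x else 1

/-- The minimax rate `min{(log₊(n/α)/n)^{βκγ/(κ(2β+d)+βγ)} + n^{-1/2}, 1}`. -/
def rateFn (d : ℕ) (β κ γ : ℝ) (n : ℕ) (α : ℝ) : ℝ :=
  min ((logPlus ((n:ℝ) / α) / n) ^ (β*κ*γ / (κ*(2*β + d) + β*γ)) + ((n:ℝ))⁻¹ ^ ((1:ℝ)/2)) 1

/-- The Hölder class for `β ∈ (0,1]`: `|η(x') - η(x)| ≤ C_S ‖x'-x‖_∞^β`. -/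
def PHolLow (d : ℕ) (β CS : ℝ) : Set (RegModel d) :=
  {Q | ∀ x x' : Rd d, |Q.η x' - Q.η x| ≤ CS * ‖x' - x‖ ^ β}

/-- The lower density `ω(x) = inf_{r ∈ (0,1)} μ(B̄_∞(x,r))/r^d`. -/
def lowerDensity {d : ℕ} (μ : Measure (Rd d)) (x : Rd d) : ℝ :=
  ⨅ r : Set.Ioo (0:ℝ) 1, (μ (Metric.closedBall x (r:ℝ))).toReal / (r:ℝ) ^ d

/-- The approximable class `𝒫_App(𝒜,τ,κ,γ,C_App)`. -/
def PApp (d : ℕ) (As : Set (Set (Rd d))) (τ κ γ CA : ℝ) : Set (RegModel d) :=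
  {Q | ∀ ξ Δ : ℝ, 0 < ξ → 0 < Δ →
    Mtau Q As τ - CA * (ξ ^ κ + Δ ^ γ) ≤
      sSup ((fun A => (Q.μm A).toReal) ''
        {A | A ∈ As ∧ A ⊆ {x | ξ ≤ lowerDensity Q.μm x} ∩ superLevel Q.η (τ + Δ)})}

/-- `VCDimLE As k` : the Vapnik–Chervonenkis dimension of `As` is at most `k`. -/
def VCDimLE {α : Type*} (As : Set (Set α)) (k : ℕ) : Prop :=
  ∀ s : Finset α,
    (∀ t : Finset α, t ⊆ s → ∃ A ∈ As, (s : Set α) ∩ A = (t : Set α)) → s.card ≤ k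

/-- The class of compact axis-aligned hyper-rectangles. -/
def Arect (d : ℕ) : Set (Set (Rd d)) :=
  {A | ∃ a b : Rd d, (∀ j, a j ≤ b j) ∧ A = Set.Icc a b}

/-- The class of convex subsets of `ℝ^d`. -/
def Aconv (d : ℕ) : Set (Set (Rd d)) := {A | Convex ℝ A}


/-- The regular set `ℛ_υ(μ)`, defined relative to a given density `f` of `μ`. -/
def regularSetF {d : ℕ} (υ : ℝ) (μ : Measure (Rd d)) (f : Rd d → ℝ) : Set (Rd d) :=
  ⋂ r ∈ Set.Ioo (0:ℝ) 1,
    {x | ENNReal.ofReal (υ * r ^ d * sSup (f '' Metric.ball x ((1 + υ) * r)))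
          ≤ μ (Metric.ball x r)}


/-! ### Auxiliary lemmas -/

section Aux

open Filter

variable {d : ℕ}

lemma measure_toReal_le_one {μ : Measure (Rd d)} (hμ : IsProbabilityMeasure μ)
    (s : Set (Rd d)) : (μ s).toReal ≤ 1 := by
  have h := prob_le_one (μ := μ) (s := s)
  have := ENNReal.toReal_mono ENNReal.one_ne_top h
  simpa using this

lemma mtau_bddAbove (Q : RegModel d) (hμ : IsProbabilityMeasure Q.μm) (τ : ℝ) :
    BddAbove ((fun A => (Q.μm A).toReal) '' {A | A ∈ Arect d ∧ A ⊆ superLevel Q.η τ}) := by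
  refine ⟨1, ?_⟩
  rintro _ ⟨A, -, rfl⟩
  exact measure_toReal_le_one hμ A

/-- If `ξ ≤ ω(a)` (lower density) then `ξ ≤ 2^d f(a)` for a continuous density `f`. -/
lemma lowerDensity_le_density (hd : 0 < d) (f : Rd d → ℝ) (hf_cont : Continuous f)
    (hf_nonneg : ∀ x, 0 ≤ f x) {μ : Measure (Rd d)}
    (hdens : μ = MeasureTheory.volume.withDensity (fun x => ENNReal.ofReal (f x)))
    {ξ : ℝ} {a : Rd d} (h : ξ ≤ lowerDensity μ a) : ξ ≤ 2 ^ d * f a := by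
  by_contra hcon
  push_neg at hcon
  have h2d : (0:ℝ) < 2 ^ d := by positivity
  have hfa : f a < ξ / 2 ^ d := by rw [lt_div_iff₀ h2d]; linarith [hcon]
  set t : ℝ := (f a + ξ / 2 ^ d) / 2 with ht
  have hfat : f a < t := by rw [ht]; linarith
  have htξ : t * 2 ^ d < ξ := by
    have : t < ξ / 2 ^ d := by rw [ht]; linarith
    calc t * 2 ^ d < (ξ / 2 ^ d) * 2 ^ d := by
          exact mul_lt_mul_of_pos_right this h2d
      _ = ξ := by field_simp
  have ht0 : 0 ≤ t := le_trans (hf_nonneg a) hfat.le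
  -- find a small closed ball on which f < t
  have hopen : IsOpen (f ⁻¹' Set.Iio t) := (isOpen_Iio).preimage hf_cont
  obtain ⟨ε, hε, hball⟩ := Metric.isOpen_iff.mp hopen a hfat
  set δ : ℝ := min (ε / 2) (1 / 2) with hδdef
  have hδpos : 0 < δ := by positivity
  have hδ1 : δ < 1 := lt_of_le_of_lt (min_le_right _ _) (by norm_num)
  have hδε : δ < ε := lt_of_le_of_lt (min_le_left _ _) (by linarith)
  have hsub : Metric.closedBall a δ ⊆ f ⁻¹' Set.Iio t :=
    (Metric.closedBall_subset_ball hδε).trans hball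
  -- the lower density bound at radius δ
  have hbdd : BddBelow (Set.range fun r : Set.Ioo (0:ℝ) 1 =>
      (μ (Metric.closedBall a (r:ℝ))).toReal / (r:ℝ) ^ d) := by
    refine ⟨0, ?_⟩
    rintro _ ⟨r, rfl⟩
    exact div_nonneg ENNReal.toReal_nonneg (pow_nonneg r.2.1.le d)
  have h1 : ξ ≤ (μ (Metric.closedBall a δ)).toReal / δ ^ d := by
    have := ciInf_le hbdd (⟨δ, hδpos, hδ1⟩ : Set.Ioo (0:ℝ) 1)
    exact le_trans h this
  -- upper bound on μ(closed ball)
  have hIcc : Metric.closedBall a δ ⊆ Set.Icc (fun j => a j - δ) (fun j => a j + δ) := by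
    intro z hz
    rw [Metric.mem_closedBall] at hz
    constructor
    · intro j
      have hj := le_trans (dist_le_pi_dist z a j) hz
      rw [Real.dist_eq, abs_le] at hj
      show a j - δ ≤ z j
      linarith [hj.1]
    · intro j
      have hj := le_trans (dist_le_pi_dist z a j) hz
      rw [Real.dist_eq, abs_le] at hj
      show z j ≤ a j + δ
      linarith [hj.2]
  have hvol : MeasureTheory.volume (Metric.closedBall a δ) ≤ ENNReal.ofReal ((2 * δ) ^ d) := by
    calc MeasureTheory.volume (Metric.closedBall a δ)
        ≤ MeasureTheory.volume (Set.Icc (fun j => a j - δ) (fun j => a j + δ)) :=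
          measure_mono hIcc
      _ = ∏ _i : Fin d, ENNReal.ofReal (2 * δ) := by
          rw [Real.volume_Icc_pi]; congr 1; funext i; congr 1; ring
      _ = ENNReal.ofReal (2 * δ) ^ d := by rw [Finset.prod_const]; simp
      _ = ENNReal.ofReal ((2 * δ) ^ d) := by
          rw [ENNReal.ofReal_pow (by positivity)]
  have hμball : μ (Metric.closedBall a δ) ≤ ENNReal.ofReal (t * (2 * δ) ^ d) := by
    rw [hdens, MeasureTheory.withDensity_apply _ Metric.isClosed_closedBall.measurableSet]
    calc ∫⁻ x in Metric.closedBall a δ, ENNReal.ofReal (f x)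
        ≤ ∫⁻ _x in Metric.closedBall a δ, ENNReal.ofReal t := by
          refine MeasureTheory.setLIntegral_mono measurable_const ?_
          intro x hx
          exact ENNReal.ofReal_le_ofReal (le_of_lt (hsub hx))
      _ = ENNReal.ofReal t * MeasureTheory.volume (Metric.closedBall a δ) := by
          rw [MeasureTheory.setLIntegral_const]
      _ ≤ ENNReal.ofReal t * ENNReal.ofReal ((2 * δ) ^ d) := by
          exact mul_le_mul_right hvol _
      _ = ENNReal.ofReal (t * (2 * δ) ^ d) := by
          rw [ENNReal.ofReal_mul ht0]
  have h2 : (μ (Metric.closedBall a δ)).toReal ≤ t * (2 * δ) ^ d :=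
    ENNReal.toReal_le_of_le_ofReal (mul_nonneg ht0 (by positivity)) hμball
  have hδd : (0:ℝ) < δ ^ d := by positivity
  have h3 : ξ * δ ^ d ≤ t * (2 * δ) ^ d := by
    calc ξ * δ ^ d ≤ (μ (Metric.closedBall a δ)).toReal := by
          rw [← le_div_iff₀ hδd]; exact h1
      _ ≤ t * (2 * δ) ^ d := h2
  have h4 : t * (2 * δ) ^ d = t * 2 ^ d * δ ^ d := by rw [mul_pow]; ring
  nlinarith [h3, h4, hδd, htξ]


/-- Geometric deficit: any rectangle inside the `ξ`-dense part of the `(τ+Δ)`-superlevel set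
misses a definite amount of mass compared to `Mtau`. -/
lemma deficit_lemma (hd : 0 < d) (Q : RegModel d) (hμ : IsProbabilityMeasure Q.μm)
    (τ β Δ ξ υ CS : ℝ)
    (hβ : β ∈ Set.Ioc (0:ℝ) 1) (hCS : 1 ≤ CS) (hυ : υ ∈ Set.Ioo (0:ℝ) 1)
    (hΔ : 0 < Δ) (hξ : 0 < ξ)
    (hQHol : Q ∈ PHolLow d β CS)
    (f : Rd d → ℝ) (hf_cont : Continuous f) (hf_nonneg : ∀ x, 0 ≤ f x)
    (hdens : Q.μm = MeasureTheory.volume.withDensity (fun x => ENNReal.ofReal (f x)))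
    (hreg : superLevel Q.η τ ⊆ regularSetF υ Q.μm f)
    (hρ1 : (Δ / CS) ^ ((1:ℝ)/β) < 1)
    (A : Set (Rd d)) (hA : A ∈ Arect d)
    (hAsub : A ⊆ {x | ξ ≤ lowerDensity Q.μm x} ∩ superLevel Q.η (τ + Δ)) :
    (Q.μm A).toReal + υ * (((Δ / CS) ^ ((1:ℝ)/β)) / 2) ^ d * (ξ / 2 ^ d)
      ≤ Mtau Q (Arect d) τ := by
  obtain ⟨a, b, hab, rfl⟩ := hA
  set ρ : ℝ := (Δ / CS) ^ ((1:ℝ)/β) with hρdef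
  have hCS0 : (0:ℝ) < CS := lt_of_lt_of_le one_pos hCS
  have hρpos : 0 < ρ := Real.rpow_pos_of_pos (div_pos hΔ hCS0) _
  have ha : a ∈ Set.Icc a b := ⟨le_refl a, hab⟩
  have haA := hAsub ha
  have hfa : ξ ≤ 2 ^ d * f a :=
    lowerDensity_le_density hd f hf_cont hf_nonneg hdens haA.1
  have hρβ : ρ ^ β = Δ / CS := by
    rw [hρdef, ← Real.rpow_mul (div_pos hΔ hCS0).le, one_div_mul_cancel hβ.1.ne',
      Real.rpow_one]
  -- the enlarged rectangle is inside the τ-superlevel set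
  have hAρ : Set.Icc (fun j => a j - ρ) (fun j => b j + ρ) ⊆ superLevel Q.η τ := by
    intro z hz
    set x : Rd d := fun j => max (a j) (min (z j) (b j)) with hx
    have hxA : x ∈ Set.Icc a b := by
      constructor
      · intro j; exact le_max_left _ _
      · intro j
        show max (a j) (min (z j) (b j)) ≤ b j
        exact max_le (hab j) (min_le_right _ _)
    have hzx : ‖z - x‖ ≤ ρ := by
      rw [pi_norm_le_iff_of_nonneg hρpos.le]
      intro j
      have hz1 : a j - ρ ≤ z j := hz.1 j
      have hz2 : z j ≤ b j + ρ := hz.2 j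
      have hxj : x j = max (a j) (min (z j) (b j)) := rfl
      show ‖z j - x j‖ ≤ ρ
      rw [Real.norm_eq_abs, abs_le]
      constructor
      · have h1 : x j ≤ z j + ρ := by
          rw [hxj]
          exact max_le (by linarith) (le_trans (min_le_left _ _) (by linarith))
        linarith
      · have h1 : z j - ρ ≤ min (z j) (b j) := le_min (by linarith) (by linarith)
        have h2 : min (z j) (b j) ≤ x j := by rw [hxj]; exact le_max_right _ _
        linarith
    have hηz := hQHol x z
    have hpow : ‖z - x‖ ^ β ≤ ρ ^ β :=
      Real.rpow_le_rpow (norm_nonneg _) hzx hβ.1.le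
    have hCSpow : CS * ‖z - x‖ ^ β ≤ Δ := by
      rw [hρβ] at hpow
      calc CS * ‖z - x‖ ^ β ≤ CS * (Δ / CS) := mul_le_mul_of_nonneg_left hpow hCS0.le
        _ = Δ := by field_simp
    have hηx : τ + Δ ≤ Q.η x := (hAsub hxA).2
    have habs := abs_le.mp hηz
    show τ ≤ Q.η z
    linarith [habs.1]
  -- the shifted point y and its small ball
  set y : Rd d := fun j => a j - ρ/2 with hy
  have hyAρ : y ∈ Set.Icc (fun j => a j - ρ) (fun j => b j + ρ) := by
    constructor
    · intro j; show a j - ρ ≤ a j - ρ/2; linarith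
    · intro j
      show a j - ρ/2 ≤ b j + ρ
      have := hab j; linarith
  have hyτ : y ∈ superLevel Q.η τ := hAρ hyAρ
  have hr : ρ/2 ∈ Set.Ioo (0:ℝ) 1 := ⟨by positivity, by linarith⟩
  have hregy := hreg hyτ
  rw [regularSetF, Set.mem_iInter₂] at hregy
  have hkey := hregy (ρ/2) hr
  simp only [Set.mem_setOf_eq] at hkey
  -- f a is below the sup over the ball around y
  have haball : a ∈ Metric.ball y ((1 + υ) * (ρ/2)) := by
    rw [Metric.mem_ball]
    have hda : dist a y ≤ ρ/2 := by
      rw [dist_pi_le_iff (by positivity)]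
      intro j
      have hyj : y j = a j - ρ/2 := rfl
      rw [Real.dist_eq, hyj]
      rw [show a j - (a j - ρ/2) = ρ/2 by ring, abs_of_nonneg (by positivity)]
    have : ρ/2 < (1 + υ) * (ρ/2) := by nlinarith [hυ.1, hρpos]
    linarith
  have hbddA : BddAbove (f '' Metric.ball y ((1 + υ) * (ρ/2))) :=
    BddAbove.mono (Set.image_mono (f := f) Metric.ball_subset_closedBall)
      ((isCompact_closedBall y _).bddAbove_image hf_cont.continuousOn)
  have hsup : f a ≤ sSup (f '' Metric.ball y ((1 + υ) * (ρ/2))) :=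
    le_csSup hbddA ⟨a, haball, rfl⟩
  have hmassB : ENNReal.ofReal (υ * (ρ/2) ^ d * (ξ / 2 ^ d))
      ≤ Q.μm (Metric.ball y (ρ/2)) := by
    refine le_trans (ENNReal.ofReal_le_ofReal ?_) hkey
    have h2d : (0:ℝ) < 2 ^ d := by positivity
    have hfa' : ξ / 2 ^ d ≤ f a := by rw [div_le_iff₀ h2d]; linarith [hfa]
    exact mul_le_mul_of_nonneg_left (le_trans hfa' hsup)
      (mul_nonneg hυ.1.le (by positivity))
  -- the ball is disjoint from A and inside the enlarged rectangle
  have hdisj : Disjoint (Metric.ball y (ρ/2)) (Set.Icc a b) := by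
    rw [Set.disjoint_left]
    intro z hz hzA
    have hj := lt_of_le_of_lt (dist_le_pi_dist z y ⟨0, hd⟩) (Metric.mem_ball.mp hz)
    rw [Real.dist_eq, abs_lt] at hj
    have hyj : y ⟨0, hd⟩ = a ⟨0, hd⟩ - ρ/2 := rfl
    have h1 : a ⟨0, hd⟩ ≤ z ⟨0, hd⟩ := hzA.1 ⟨0, hd⟩
    rw [hyj] at hj
    linarith [hj.2]
  have hBsub : Metric.ball y (ρ/2) ⊆ Set.Icc (fun j => a j - ρ) (fun j => b j + ρ) := by
    intro z hz
    constructor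
    · intro j
      have hj := lt_of_le_of_lt (dist_le_pi_dist z y j) (Metric.mem_ball.mp hz)
      rw [Real.dist_eq, abs_lt] at hj
      have hyj : y j = a j - ρ/2 := rfl
      rw [hyj] at hj
      show a j - ρ ≤ z j
      linarith [hj.2]
    · intro j
      have hj := lt_of_le_of_lt (dist_le_pi_dist z y j) (Metric.mem_ball.mp hz)
      rw [Real.dist_eq, abs_lt] at hj
      have hyj : y j = a j - ρ/2 := rfl
      rw [hyj] at hj
      show z j ≤ b j + ρ
      have := hab j
      linarith [hj.2]
  have hArectρ : Set.Icc (fun j => a j - ρ) (fun j => b j + ρ) ∈ Arect d :=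
    ⟨_, _, fun j => by have := hab j; linarith, rfl⟩
  have hAsubρ : Set.Icc a b ⊆ Set.Icc (fun j => a j - ρ) (fun j => b j + ρ) := by
    intro z hz
    constructor
    · intro j; show a j - ρ ≤ z j; have := hz.1 j; linarith
    · intro j; show z j ≤ b j + ρ; have := hz.2 j; linarith
  have hunion : Q.μm (Set.Icc a b) + Q.μm (Metric.ball y (ρ/2))
      ≤ Q.μm (Set.Icc (fun j => a j - ρ) (fun j => b j + ρ)) := by
    rw [← measure_union (hdisj.symm) Metric.isOpen_ball.measurableSet]
    exact measure_mono (Set.union_subset hAsubρ hBsub)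
  have hB' : υ * (ρ/2) ^ d * (ξ / 2 ^ d) ≤ (Q.μm (Metric.ball y (ρ/2))).toReal := by
    have := ENNReal.toReal_mono (measure_ne_top _ _) hmassB
    rwa [ENNReal.toReal_ofReal
      (mul_nonneg (mul_nonneg hυ.1.le (by positivity)) (by positivity))] at this
  have hsum : (Q.μm (Set.Icc a b)).toReal + (Q.μm (Metric.ball y (ρ/2))).toReal
      ≤ (Q.μm (Set.Icc (fun j => a j - ρ) (fun j => b j + ρ))).toReal := by
    have := ENNReal.toReal_mono (measure_ne_top _ _) hunion
    rwa [ENNReal.toReal_add (measure_ne_top _ _) (measure_ne_top _ _)] at this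
  have hle : (Q.μm (Set.Icc (fun j => a j - ρ) (fun j => b j + ρ))).toReal
      ≤ Mtau Q (Arect d) τ :=
    le_csSup (mtau_bddAbove Q hμ τ) ⟨_, ⟨hArectρ, hAρ⟩, rfl⟩
  linarith [hB', hsum, hle]

/-- There is a rectangle of positive mass inside the superlevel set. -/
lemma exists_rect_pos (Q : RegModel d) (hμ : IsProbabilityMeasure Q.μm)
    (τ : ℝ) (f : Rd d → ℝ) (hf_cont : Continuous f) (hf_nonneg : ∀ x, 0 ≤ f x)
    (hdens : Q.μm = MeasureTheory.volume.withDensity (fun x => ENNReal.ofReal (f x)))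
    (hpos : 0 < Q.μm {x | τ < Q.η x}) :
    ∃ A0 ∈ Arect d, A0 ⊆ superLevel Q.η τ ∧ 0 < (Q.μm A0).toReal := by
  set U := {x | τ < Q.η x} with hU
  have hUopen : IsOpen U := isOpen_lt continuous_const Q.η_cont
  have hex : ∃ x1 ∈ U, 0 < f x1 := by
    by_contra hcon
    push_neg at hcon
    have hzero : Q.μm U = 0 := by
      rw [hdens, MeasureTheory.withDensity_apply _ hUopen.measurableSet]
      have hz : ∀ x ∈ U, ENNReal.ofReal (f x) = (0 : ℝ≥0∞) := fun x hx => by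
        have : f x = 0 := le_antisymm (hcon x hx) (hf_nonneg x)
        simp [this]
      calc ∫⁻ x in U, ENNReal.ofReal (f x)
          = ∫⁻ _x in U, (0:ℝ≥0∞) :=
            MeasureTheory.setLIntegral_congr_fun hUopen.measurableSet
              hz
        _ = 0 := by simp
    rw [hzero] at hpos
    exact lt_irrefl 0 hpos
  obtain ⟨x1, hx1U, hfx1⟩ := hex
  have hV : IsOpen (U ∩ f ⁻¹' Set.Ioi (f x1 / 2)) :=
    hUopen.inter (isOpen_Ioi.preimage hf_cont)
  have hx1V : x1 ∈ U ∩ f ⁻¹' Set.Ioi (f x1 / 2) :=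
    ⟨hx1U, by simp only [Set.mem_preimage, Set.mem_Ioi]; linarith⟩
  obtain ⟨ε, hε, hball⟩ := Metric.isOpen_iff.mp hV x1 hx1V
  set δ : ℝ := ε/2 with hδ
  have hδpos : 0 < δ := by positivity
  have hsub : Set.Icc (fun j => x1 j - δ) (fun j => x1 j + δ) ⊆ Metric.ball x1 ε := by
    intro z hz
    rw [Set.mem_Icc] at hz
    rw [Metric.mem_ball]
    have hdz : dist z x1 ≤ δ := by
      rw [dist_pi_le_iff hδpos.le]
      intro j
      rw [Real.dist_eq, abs_le]
      have h1 : x1 j - δ ≤ z j := hz.1 j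
      have h2 : z j ≤ x1 j + δ := hz.2 j
      constructor <;> linarith
    rw [hδ] at hdz
    linarith
  set A0 := Set.Icc (fun j => x1 j - δ) (fun j => x1 j + δ) with hA0
  refine ⟨A0, ⟨_, _, fun j => by show x1 j - δ ≤ x1 j + δ; linarith, hA0⟩, ?_, ?_⟩
  · intro z hz
    have hlt : τ < Q.η z := (hball (hsub hz)).1
    exact le_of_lt hlt
  · have hper : ∀ z ∈ A0, f x1 / 2 ≤ f z := fun z hz =>
      le_of_lt (hball (hsub hz)).2
    have hlow : ENNReal.ofReal (f x1 / 2) * MeasureTheory.volume A0 ≤ Q.μm A0 := by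
      rw [hdens, MeasureTheory.withDensity_apply _ measurableSet_Icc]
      calc ENNReal.ofReal (f x1 / 2) * MeasureTheory.volume A0
          = ∫⁻ _x in A0, ENNReal.ofReal (f x1 / 2) := by
            rw [MeasureTheory.setLIntegral_const]
        _ ≤ ∫⁻ x in A0, ENNReal.ofReal (f x) := by
            refine MeasureTheory.setLIntegral_mono
              (ENNReal.measurable_ofReal.comp hf_cont.measurable) ?_
            intro x hx
            exact ENNReal.ofReal_le_ofReal (hper x hx)
    have hvol : MeasureTheory.volume A0 = ENNReal.ofReal ((2*δ) ^ d) := by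
      rw [Real.volume_Icc_pi]
      calc (∏ j : Fin d, ENNReal.ofReal ((x1 j + δ) - (x1 j - δ)))
          = ∏ _j : Fin d, ENNReal.ofReal (2*δ) := by
            congr 1; funext j; congr 1; ring
        _ = ENNReal.ofReal (2*δ) ^ d := by rw [Finset.prod_const]; simp
        _ = ENNReal.ofReal ((2*δ) ^ d) := by rw [ENNReal.ofReal_pow (by positivity)]
    have hposA : 0 < Q.μm A0 := by
      refine lt_of_lt_of_le ?_ hlow
      rw [hvol]
      exact ENNReal.mul_pos (ENNReal.ofReal_pos.mpr (by linarith)).ne'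
        (ENNReal.ofReal_pos.mpr (by positivity)).ne'
    exact ENNReal.toReal_pos hposA.ne' (measure_ne_top _ _)

end Aux

/-- **Lemma 5.17** (natural constraints on the parameters `β`, `κ` and `γ`). -/
theorem stmt15 (d : ℕ) (hd : 0 < d) (τ β γ κ υ CS CA : ℝ)
    (hτ : τ ∈ Set.Ioo (0:ℝ) 1) (hβ : β ∈ Set.Ioc (0:ℝ) 1) (hγ : 0 < γ) (hκ : 0 < κ)
    (hυ : υ ∈ Set.Ioo (0:ℝ) 1) (hCS : 1 ≤ CS) (hCA : 1 ≤ CA)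
    (Q : RegModel d) (hQHol : Q ∈ PHolLow d β CS) (hQApp : Q ∈ PApp d (Arect d) τ κ γ CA)
    (f : Rd d → ℝ) (hf_cont : Continuous f) (hf_nonneg : ∀ x, 0 ≤ f x)
    (hdens : Q.μm = MeasureTheory.volume.withDensity (fun x => ENNReal.ofReal (f x)))
    (hreg : superLevel Q.η τ ⊆ regularSetF υ Q.μm f)
    (hpos : 0 < Q.μm {x | τ < Q.η x})
    (hlevel : ∃ x, Q.η x = τ) :
    β * γ * (κ - 1) ≤ d * κ := by
  by_contra hcon
  push_neg at hcon
  have hμprob : IsProbabilityMeasure Q.μm := by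
    haveI := Q.isProb
    unfold RegModel.μm
    exact Measure.isProbabilityMeasure_map measurable_fst.aemeasurable
  have hd0 : (0:ℝ) < d := by exact_mod_cast hd
  have hCS0 : (0:ℝ) < CS := lt_of_lt_of_le one_pos hCS
  have hκ1 : 1 < κ := by
    by_contra hno
    push_neg at hno
    have h1 : β * γ * (κ - 1) ≤ 0 :=
      mul_nonpos_of_nonneg_of_nonpos (le_of_lt (mul_pos hβ.1 hγ)) (by linarith)
    have h2 : (0:ℝ) < d * κ := mul_pos hd0 hκ
    linarith
  set e : ℝ := (d:ℝ)/β + γ/κ with he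
  have heγ : e < γ := by
    rw [he, div_add_div _ _ hβ.1.ne' hκ.ne', div_lt_iff₀ (mul_pos hβ.1 hκ)]
    nlinarith [hcon]
  set c : ℝ := υ / (CS ^ ((d:ℝ)/β) * 4 ^ d) with hc
  have hcpos : 0 < c :=
    div_pos hυ.1 (mul_pos (Real.rpow_pos_of_pos hCS0 _) (by positivity))
  obtain ⟨A0, hA0rect, hA0sub, hA0pos⟩ :=
    exists_rect_pos Q hμprob τ f hf_cont hf_nonneg hdens hpos
  set m0 := (Q.μm A0).toReal with hm0
  -- the key inequality for each small Δ
  have key : ∀ Δ : ℝ, 0 < Δ → Δ < 1 →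
      min m0 (c * Δ ^ e) ≤ CA * (Δ ^ γ + Δ ^ γ) := by
    intro Δ hΔ hΔ1
    set ξ : ℝ := Δ ^ (γ/κ) with hξdef
    have hξpos : 0 < ξ := Real.rpow_pos_of_pos hΔ _
    have hξκ : ξ ^ κ = Δ ^ γ := by
      rw [hξdef, ← Real.rpow_mul hΔ.le, div_mul_cancel₀ _ hκ.ne']
    have happ := hQApp ξ Δ hξpos hΔ
    rw [hξκ] at happ
    have hρ1 : (Δ / CS) ^ ((1:ℝ)/β) < 1 := by
      apply Real.rpow_lt_one (div_nonneg hΔ.le hCS0.le) _ (one_div_pos.mpr hβ.1)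
      rw [div_lt_one hCS0]
      linarith
    have hCSd : CS ^ ((d:ℝ)/β) ≠ 0 := (Real.rpow_pos_of_pos hCS0 _).ne'
    have h2d : ((2:ℝ) ^ d) ≠ 0 := by positivity
    have h4d : ((4:ℝ) ^ d) ≠ 0 := by positivity
    have hid : υ * (((Δ / CS) ^ ((1:ℝ)/β)) / 2) ^ d * (ξ / 2 ^ d) = c * Δ ^ e := by
      have h1 : ((Δ / CS) ^ ((1:ℝ)/β)) ^ d = Δ ^ ((d:ℝ)/β) / CS ^ ((d:ℝ)/β) := by
        rw [← Real.rpow_natCast ((Δ / CS) ^ ((1:ℝ)/β)) d,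
          ← Real.rpow_mul (by positivity), show (1:ℝ)/β * d = (d:ℝ)/β by ring]
        exact Real.div_rpow hΔ.le hCS0.le _
      have h44 : ((4:ℝ) ^ d) = 2 ^ d * 2 ^ d := by
        rw [← mul_pow]; norm_num
      rw [div_pow, h1, hξdef, hc, he, Real.rpow_add hΔ, h44]
      field_simp
    rcases Set.eq_empty_or_nonempty
        {A | A ∈ Arect d ∧ A ⊆ {x | ξ ≤ lowerDensity Q.μm x} ∩ superLevel Q.η (τ + Δ)}
      with hFe | hFne
    · rw [hFe] at happ
      simp only [Set.image_empty, Real.sSup_empty] at happ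
      have hm0M : m0 ≤ Mtau Q (Arect d) τ :=
        le_csSup (mtau_bddAbove Q hμprob τ) ⟨A0, ⟨hA0rect, hA0sub⟩, rfl⟩
      calc min m0 (c * Δ ^ e) ≤ m0 := min_le_left _ _
        _ ≤ CA * (Δ ^ γ + Δ ^ γ) := by linarith
    · have hub : ∀ v ∈ (fun A => (Q.μm A).toReal) ''
          {A | A ∈ Arect d ∧ A ⊆ {x | ξ ≤ lowerDensity Q.μm x} ∩ superLevel Q.η (τ + Δ)},
          v ≤ Mtau Q (Arect d) τ - c * Δ ^ e := by
        rintro _ ⟨A, hAF, rfl⟩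
        have hdef := deficit_lemma hd Q hμprob τ β Δ ξ υ CS hβ hCS hυ hΔ hξpos hQHol
          f hf_cont hf_nonneg hdens hreg hρ1 A hAF.1 hAF.2
        rw [hid] at hdef
        linarith
      have hS := csSup_le (hFne.image _) hub
      calc min m0 (c * Δ ^ e) ≤ c * Δ ^ e := min_le_right _ _
        _ ≤ CA * (Δ ^ γ + Δ ^ γ) := by linarith
  -- a rpow tendsto helper
  have htend : ∀ p : ℝ, 0 < p → ∀ K : ℝ,
      Filter.Tendsto (fun Δ : ℝ => K * Δ ^ p) (nhdsWithin 0 (Set.Ioi 0)) (nhds 0) := by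
    intro p hp K
    have h0 : Filter.Tendsto (fun Δ : ℝ => Δ ^ p) (nhds 0) (nhds 0) := by
      have hcont := (Real.continuousAt_rpow_const 0 p (Or.inr hp.le)).tendsto
      rwa [Real.zero_rpow hp.ne'] at hcont
    have h1 : Filter.Tendsto (fun Δ : ℝ => K * Δ ^ p)
        (nhdsWithin 0 (Set.Ioi 0)) (nhds (K * 0)) :=
      (h0.const_mul K).mono_left (nhdsWithin_le_nhds (s := Set.Ioi (0:ℝ)))
    simpa using h1
  have hm0pos : 0 < m0 := hA0pos
  have ev1 : Set.Ioo (0:ℝ) 1 ∈ nhdsWithin (0:ℝ) (Set.Ioi 0) :=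
    Ioo_mem_nhdsGT_of_mem ⟨le_refl _, one_pos⟩
  have ev2 : ∀ᶠ Δ : ℝ in nhdsWithin 0 (Set.Ioi 0), 2 * CA * Δ ^ γ < m0 :=
    (htend γ hγ (2 * CA)).eventually_lt_const hm0pos
  have ev3 : ∀ᶠ Δ : ℝ in nhdsWithin 0 (Set.Ioi 0), 2 * CA * Δ ^ (γ - e) < c :=
    (htend (γ - e) (by linarith) (2 * CA)).eventually_lt_const hcpos
  obtain ⟨Δ, hΔIoo, h2, h3⟩ :=
    ((Filter.eventually_mem_set.mpr ev1).and (ev2.and ev3)).exists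
  obtain ⟨hΔ0, hΔ1⟩ := hΔIoo
  have hkey := key Δ hΔ0 hΔ1
  have hrw : CA * (Δ ^ γ + Δ ^ γ) = 2 * CA * Δ ^ γ := by ring
  rw [hrw] at hkey
  have hsplit : Δ ^ γ = Δ ^ (γ - e) * Δ ^ e := by
    rw [← Real.rpow_add hΔ0]; ring_nf
  have hepos : (0:ℝ) < Δ ^ e := Real.rpow_pos_of_pos hΔ0 _
  have h3' : 2 * CA * Δ ^ γ < c * Δ ^ e := by
    calc 2 * CA * Δ ^ γ = (2 * CA * Δ ^ (γ - e)) * Δ ^ e := by rw [hsplit]; ring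
      _ < c * Δ ^ e := mul_lt_mul_of_pos_right h3 hepos
  have hmin : 2 * CA * Δ ^ γ < min m0 (c * Δ ^ e) := lt_min h2 h3'
  linarith

end
end

section
/- Take β > 0, C_f > 0, set m := ⌈β⌉ − 1, and let f : ℝ^d → ℝ be a ⌈β⌉-times differentiable function such that for every multi-index ν ∈ ℕ₀^d with ‖ν‖₁ = m and every x, x′ ∈ ℝ^d, |∂^ν f(x′) − ∂^ν f(x)| ≤ C_f·‖x′−x‖_∞^{β−m}. Then for all x, x′ ∈ ℝ^d, |f(x′) − T_x^β[f](x′)| ≤ C_f·binom(m+d−1, d−1)·‖x′−x‖_∞^β. -/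
open scoped BigOperators Classical

noncomputable section

/-- `⌈β⌉` as a natural number. -/
def ceilB (β : ℝ) : ℕ := ⌈β⌉₊

/-- The set of multi-indices `𝒱(β) = {ν ∈ ℕ₀^d : ‖ν‖₁ ≤ ⌈β⌉ - 1}`. -/
def MIdx (d : ℕ) (β : ℝ) : Type :=
  {ν : Fin d → Fin (ceilB β) // (∑ j, ((ν j : ℕ))) ≤ ceilB β - 1}

noncomputable instance (d : ℕ) (β : ℝ) : Fintype (MIdx d β) := by
  unfold MIdx; infer_instance

/-- Partial derivative in direction `j`. -/
noncomputable def pd {d : ℕ} (j : Fin d) (f : Rd d → ℝ) : Rd d → ℝ :=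
  fun x => fderiv ℝ f x (Pi.single j 1)

/-- Iterated partial derivative in direction `j`. -/
noncomputable def pdIter {d : ℕ} (j : Fin d) : ℕ → (Rd d → ℝ) → (Rd d → ℝ)
  | 0, f => f
  | (k+1), f => pd j (pdIter j k f)

/-- Mixed partial derivative `∂^ν f`. -/
noncomputable def pderiv {d : ℕ} (ν : Fin d → ℕ) (f : Rd d → ℝ) : Rd d → ℝ :=
  (List.finRange d).foldr (fun j g => pdIter j (ν j) g) f

/-- `f` is `k`-times differentiable. -/
def TimesDiffble (d : ℕ) (k : ℕ) (f : Rd d → ℝ) : Prop :=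
  ∀ ν : Fin d → ℕ, (∑ j, ν j) < k → Differentiable ℝ (pderiv ν f)

/-- The Taylor polynomial `T_x^β[f](x') = Σ_{ν ∈ 𝒱(β)} ((x'-x)^ν/ν!) ∂^ν f(x)`. -/
noncomputable def taylorPoly {d : ℕ} (β : ℝ) (f : Rd d → ℝ) (x x' : Rd d) : ℝ :=
  ∑ ν : MIdx d β,
    (∏ j, (x' j - x j) ^ ((ν.1 j : ℕ)) / (Nat.factorial (ν.1 j : ℕ) : ℝ)) *
      pderiv (fun j => (ν.1 j : ℕ)) f x

namespace Stmt16Aux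

variable {d : ℕ}

noncomputable def D (l : List (Fin d)) (f : Rd d → ℝ) : Rd d → ℝ :=
  l.foldr (fun j h => pd j h) f

lemma D_cons (j : Fin d) (l : List (Fin d)) (f : Rd d → ℝ) : D (j :: l) f = pd j (D l f) := rfl

lemma D_append (l₁ l₂ : List (Fin d)) (f : Rd d → ℝ) : D (l₁ ++ l₂) f = D l₁ (D l₂ f) := by
  unfold D; rw [List.foldr_append]

lemma pdIter_eq_D (j : Fin d) (n : ℕ) (f : Rd d → ℝ) :
    pdIter j n f = D (List.replicate n j) f := by
  induction n with
  | zero => rfl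
  | succ k ih => rw [List.replicate_succ, D_cons, ← ih]; rfl

/-- canonical list of a multi-index -/
def canonList (ν : Fin d → ℕ) : List (Fin d) :=
  (List.finRange d).flatMap fun j => List.replicate (ν j) j

lemma pderiv_eq_D (ν : Fin d → ℕ) (f : Rd d → ℝ) : pderiv ν f = D (canonList ν) f := by
  unfold pderiv canonList
  generalize (List.finRange d) = L
  induction L with
  | nil => rfl
  | cons a t ih =>
      rw [List.foldr_cons, List.flatMap_cons, D_append, ← ih, pdIter_eq_D]

lemma pderiv_zero (f : Rd d → ℝ) : pderiv (0 : Fin d → ℕ) f = f := by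
  unfold pderiv
  generalize (List.finRange d) = L
  induction L with
  | nil => rfl
  | cons a t ih => rw [List.foldr_cons, ih]; rfl

/-- count function of a list -/
def cnt (l : List (Fin d)) : Fin d → ℕ := fun j => l.count j

lemma sum_cnt [NeZero d] (l : List (Fin d)) : ∑ j, cnt l j = l.length := by
  induction l with
  | nil => simp [cnt]
  | cons a t ih =>
      simp only [cnt, List.count_cons, List.length_cons] at *
      rw [Finset.sum_add_distrib, ih]
      simp

lemma cnt_canonList (ν : Fin d → ℕ) : cnt (canonList ν) = ν := by
  funext j
  unfold cnt canonList
  have key : ∀ L : List (Fin d),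
      (L.flatMap fun i => List.replicate (ν i) i).count j
        = (L.map fun i => if j = i then ν i else 0).sum := by
    intro L
    induction L with
    | nil => simp
    | cons a t ih =>
        rw [List.flatMap_cons, List.count_append, ih, List.map_cons, List.sum_cons,
          List.count_replicate]
        by_cases h : j = a
        · subst h; simp
        · simp [beq_iff_eq, h, Ne.symm h]
  rw [key]
  have : ∀ L : List (Fin d), j ∈ L → L.Nodup →
      (L.map fun i => if j = i then ν i else 0).sum = ν j := by
    intro L
    induction L with
    | nil => simp
    | cons a t ih =>
        intro hj hnd
        rcases List.mem_cons.1 hj with h | h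
        · subst h
          simp only [List.map_cons, List.sum_cons, if_pos rfl]
          have : (t.map fun i => if j = i then ν i else 0).sum = 0 := by
            apply List.sum_eq_zero
            intro y hy
            rcases List.mem_map.1 hy with ⟨i, hi, rfl⟩
            have : j ≠ i := fun h => (List.nodup_cons.1 hnd).1 (h ▸ hi)
            simp [this]
          rw [this]; simp
        · have haj : j ≠ a := by
            rintro rfl; exact (List.nodup_cons.1 hnd).1 h
          simp only [List.map_cons, List.sum_cons, if_neg haj, Nat.zero_add]
          exact ih h (List.nodup_cons.1 hnd).2
  exact this _ (List.mem_finRange j) (List.nodup_finRange d)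

lemma single_eq_smul (k : Fin d) (a : ℝ) :
    (Pi.single k a : Rd d) = a • (Pi.single k (1:ℝ) : Rd d) := by
  rw [← Pi.single_smul]; simp

lemma clm_eval (ℓ : Rd d →L[ℝ] ℝ) (w : Rd d) :
    ℓ w = ∑ j, w j * ℓ (Pi.single j 1) := by
  have hw : w = ∑ k, (w k) • (Pi.single k (1:ℝ) : Rd d) := by
    conv_lhs => rw [← Finset.univ_sum_single w]
    exact Finset.sum_congr rfl fun k _ => single_eq_smul k (w k)
  conv_lhs => rw [hw]
  rw [map_sum]
  exact Finset.sum_congr rfl fun k _ => by rw [map_smul]; rfl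

lemma pd_comm (h : Rd d → ℝ) (hh : Differentiable ℝ h)
    (hph : ∀ i : Fin d, Differentiable ℝ (pd i h)) (i j : Fin d) :
    pd i (pd j h) = pd j (pd i h) := by
  funext y
  set f' : Rd d → (Rd d) →L[ℝ] ℝ :=
    fun z => ∑ k, pd k h z • (ContinuousLinearMap.proj k : (Rd d) →L[ℝ] ℝ) with hf'
  have hf'_eq : ∀ z, fderiv ℝ h z = f' z := by
    intro z
    refine ContinuousLinearMap.ext fun w => ?_
    rw [clm_eval (fderiv ℝ h z) w]
    simp [hf', ContinuousLinearMap.sum_apply, pd, mul_comm]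
  have hdiff_f' : Differentiable ℝ f' := by
    apply Differentiable.fun_sum
    intro k _
    exact (hph k).smul_const _
  have hDf' := (hdiff_f' y).hasFDerivAt
  have hsymm := second_derivative_symmetric (f := h)
    (fun z => (hf'_eq z) ▸ (hh z).hasFDerivAt) hDf' (Pi.single i 1) (Pi.single j 1)
  have happ : ∀ cvec : Rd d, ∀ w : Fin d,
      pd w (fun z => f' z cvec) y = (fderiv ℝ f' y) (Pi.single w 1) cvec := by
    intro cvec w
    have h1 : HasFDerivAt (fun z => f' z cvec) ((fderiv ℝ f' y).flip cvec) y := by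
      have := hDf'.clm_apply (hasFDerivAt_const cvec y)
      simpa using this
    show fderiv ℝ (fun z => f' z cvec) y (Pi.single w 1) = _
    rw [h1.fderiv]
    rfl
  have hpd_eq : ∀ c : Fin d, pd c h = fun z => f' z (Pi.single c 1) := by
    intro c; funext z
    show fderiv ℝ h z (Pi.single c 1) = _
    rw [hf'_eq z]
  show pd i (pd j h) y = pd j (pd i h) y
  rw [hpd_eq j, hpd_eq i, happ, happ]
  exact hsymm

lemma D_perm (f : Rd d → ℝ) (n : ℕ)
    (hdif : ∀ l : List (Fin d), l.length < n → Differentiable ℝ (D l f)) :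
    ∀ l₁ l₂ : List (Fin d), l₁.Perm l₂ → l₁.length ≤ n → D l₁ f = D l₂ f := by
  intro l₁ l₂ hp
  induction hp with
  | nil => intro _; rfl
  | cons a h ih =>
      intro hlen
      rw [D_cons, D_cons, ih (by simp at hlen; omega)]
  | swap a b t =>
      intro hlen
      simp only [List.length_cons] at hlen
      rw [D_cons, D_cons, D_cons, D_cons]
      have hdt : Differentiable ℝ (D t f) := hdif t (by omega)
      have hpdt : ∀ i : Fin d, Differentiable ℝ (pd i (D t f)) := by
        intro i
        exact hdif (i :: t) (by simp; omega)
      rw [pd_comm (D t f) hdt hpdt b a]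
  | trans h₁ h₂ ih₁ ih₂ =>
      intro hlen
      rw [ih₁ hlen, ih₂ (by rw [← h₁.length_eq]; exact hlen)]

lemma D_eq_pderiv [NeZero d] (f : Rd d → ℝ) (m : ℕ)
    (hdiff : ∀ ν : Fin d → ℕ, (∑ j, ν j) ≤ m → Differentiable ℝ (pderiv ν f)) :
    ∀ n, n ≤ m → ∀ l : List (Fin d), l.length = n → D l f = pderiv (cnt l) f := by
  intro n
  induction n using Nat.strong_induction_on with
  | _ n IH =>
    intro hnm l hl
    have hdif : ∀ l' : List (Fin d), l'.length < n → Differentiable ℝ (D l' f) := by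
      intro l' hl'
      rw [IH l'.length hl' (by omega) l' rfl]
      apply hdiff
      rw [sum_cnt]
      omega
    have hperm : l.Perm (canonList (cnt l)) := by
      rw [List.perm_iff_count]
      intro a
      show cnt l a = _
      rw [show (canonList (cnt l)).count a = cnt (canonList (cnt l)) a from rfl,
        cnt_canonList]
    rw [D_perm f n hdif l (canonList (cnt l)) hperm (le_of_eq hl), ← pderiv_eq_D]

def addj (ν : Fin d → ℕ) (j : Fin d) : Fin d → ℕ := fun i => ν i + if i = j then 1 else 0
def subj (μ : Fin d → ℕ) (j : Fin d) : Fin d → ℕ := fun i => μ i - (if i = j then 1 else 0)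

lemma pd_pderiv [NeZero d] (f : Rd d → ℝ) (m : ℕ)
    (hdiff : ∀ ν : Fin d → ℕ, (∑ j, ν j) ≤ m → Differentiable ℝ (pderiv ν f))
    (ν : Fin d → ℕ) (hν : (∑ j, ν j) + 1 ≤ m) (j : Fin d) :
    pd j (pderiv ν f) = pderiv (addj ν j) f := by
  have hlen : (canonList ν).length = ∑ i, ν i := by
    rw [← sum_cnt (canonList ν)]
    simp [cnt_canonList]
  have h1 : pd j (pderiv ν f) = D (j :: canonList ν) f := by
    rw [pderiv_eq_D, D_cons]
  rw [h1, D_eq_pderiv f m hdiff ((∑ i, ν i) + 1) hν _ (by simp [hlen])]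
  have hcnt : cnt (j :: canonList ν) = addj ν j := by
    funext i
    unfold cnt addj
    rw [List.count_cons]
    have : (canonList ν).count i = cnt (canonList ν) i := rfl
    rw [this, cnt_canonList]
    by_cases h : i = j
    · subst h; simp
    · simp [h, Ne.symm h]
  rw [hcnt]

def co (ν : Fin d → ℕ) : ℝ := (Nat.factorial (∑ j, ν j) : ℝ) / ∏ j, (Nat.factorial (ν j) : ℝ)

lemma sum_addj (ν : Fin d → ℕ) (j : Fin d) : ∑ i, addj ν j i = (∑ i, ν i) + 1 := by
  unfold addj
  rw [Finset.sum_add_distrib]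
  simp

lemma prodfact_pos (ν : Fin d → ℕ) : (0:ℝ) < ∏ j, (Nat.factorial (ν j) : ℝ) := by
  apply Finset.prod_pos
  intro i _
  exact_mod_cast Nat.factorial_pos _

lemma co_pos (ν : Fin d → ℕ) : 0 < co ν := by
  unfold co
  apply div_pos
  · exact_mod_cast Nat.factorial_pos _
  · exact prodfact_pos ν

lemma prodfact_addj (ν : Fin d → ℕ) (j : Fin d) :
    (∏ i, (Nat.factorial (addj ν j i) : ℝ))
      = ((ν j : ℝ) + 1) * ∏ i, (Nat.factorial (ν i) : ℝ) := by
  rw [← Finset.mul_prod_erase Finset.univ _ (Finset.mem_univ j),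
      ← Finset.mul_prod_erase Finset.univ (fun i => (Nat.factorial (ν i) : ℝ)) (Finset.mem_univ j)]
  have h1 : addj ν j j = ν j + 1 := by simp [addj]
  have h2 : ∀ i ∈ Finset.univ.erase j, (Nat.factorial (addj ν j i) : ℝ) = Nat.factorial (ν i) := by
    intro i hi
    have : i ≠ j := (Finset.mem_erase.1 hi).1
    simp [addj, this]
  rw [Finset.prod_congr rfl h2, h1, Nat.factorial_succ]
  push_cast
  ring

lemma co_addj (ν : Fin d → ℕ) (j : Fin d) :
    co (addj ν j) = co ν * ((∑ i, ν i : ℕ) + 1) / ((ν j : ℝ) + 1) := by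
  unfold co
  rw [sum_addj, prodfact_addj, Nat.factorial_succ]
  have h1 : ((ν j : ℝ) + 1) ≠ 0 := by positivity
  have h2 := (prodfact_pos ν).ne'
  field_simp
  push_cast
  ring

lemma subj_addj (ν : Fin d → ℕ) (j : Fin d) : subj (addj ν j) j = ν := by
  funext i; simp [subj, addj]

lemma addj_subj (μ : Fin d → ℕ) (j : Fin d) (h : μ j ≠ 0) : addj (subj μ j) j = μ := by
  funext i
  by_cases hij : i = j
  · subst hij; simp [subj, addj]; omega
  · simp [subj, addj, hij]

lemma sum_subj (μ : Fin d → ℕ) (j : Fin d) (h : μ j ≠ 0) :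
    ∑ i, subj μ j i = (∑ i, μ i) - 1 := by
  have := sum_addj (subj μ j) j
  rw [addj_subj μ j h] at this
  omega

/-- The key reindexing identity. -/
lemma reindex (k : ℕ) (F : (Fin d → ℕ) → ℝ) :
    ∑ μ ∈ Finset.Nat.antidiagonalTuple d (k+1), co μ * F μ
      = ∑ ν ∈ Finset.Nat.antidiagonalTuple d k, ∑ j, co ν * F (addj ν j) := by
  classical
  have step1 : ∀ μ ∈ Finset.Nat.antidiagonalTuple d (k+1),
      co μ * F μ = ∑ j, ((μ j : ℝ)/((k:ℝ)+1)) * (co μ * F μ) := by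
    intro μ hμ
    have hs : (∑ i, μ i) = k + 1 := Finset.Nat.mem_antidiagonalTuple.1 hμ
    rw [← Finset.sum_mul, ← Finset.sum_div]
    rw [show (∑ i, (μ i : ℝ)) = ((k:ℝ)+1) by exact_mod_cast congrArg (Nat.cast : ℕ → ℝ) hs]
    rw [div_self (by positivity), one_mul]
  rw [Finset.sum_congr rfl step1, Finset.sum_sigma']
  rw [Finset.sum_sigma' (Finset.Nat.antidiagonalTuple d k)]
  rw [← Finset.sum_filter_add_sum_filter_not
    (((Finset.Nat.antidiagonalTuple d (k+1)).sigma fun _ => (Finset.univ : Finset (Fin d))))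
    (fun p => p.1 p.2 ≠ 0)]
  have hzero : ∑ p ∈ (((Finset.Nat.antidiagonalTuple d (k+1)).sigma fun _ =>
      (Finset.univ : Finset (Fin d)))).filter (fun p => ¬ p.1 p.2 ≠ 0),
      ((p.1 p.2 : ℝ)/((k:ℝ)+1)) * (co p.1 * F p.1) = 0 := by
    apply Finset.sum_eq_zero
    intro p hp
    have : p.1 p.2 = 0 := by simpa using (Finset.mem_filter.1 hp).2
    rw [this]
    simp
  rw [hzero, add_zero]
  refine Finset.sum_bij' (i := fun p _ => (⟨subj p.1 p.2, p.2⟩ : Σ _ : Fin d → ℕ, Fin d))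
    (j := fun p _ => (⟨addj p.1 p.2, p.2⟩ : Σ _ : Fin d → ℕ, Fin d)) ?_ ?_ ?_ ?_ ?_
  · intro p hp
    rw [Finset.mem_filter, Finset.mem_sigma] at hp
    obtain ⟨⟨h1, _⟩, h2⟩ := hp
    rw [Finset.mem_sigma]
    refine ⟨?_, Finset.mem_univ _⟩
    rw [Finset.Nat.mem_antidiagonalTuple] at h1 ⊢
    rw [sum_subj _ _ h2, h1]
    omega
  · intro p hp
    rw [Finset.mem_sigma] at hp
    rw [Finset.mem_filter, Finset.mem_sigma]
    rw [Finset.Nat.mem_antidiagonalTuple] at hp ⊢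
    refine ⟨⟨?_, Finset.mem_univ _⟩, ?_⟩
    · rw [sum_addj, hp.1]
    · simp [addj]
  · intro p hp
    rw [Finset.mem_filter] at hp
    have := addj_subj p.1 p.2 hp.2
    exact Sigma.ext (by simpa using this) (by simp)
  · intro p hp
    have := subj_addj p.1 p.2
    exact Sigma.ext (by simpa using this) (by simp)
  · intro p hp
    rw [Finset.mem_filter, Finset.mem_sigma] at hp
    obtain ⟨⟨h1, _⟩, h2⟩ := hp
    rw [Finset.Nat.mem_antidiagonalTuple] at h1
    rw [addj_subj p.1 p.2 h2]
    have hsub : ∑ i, subj p.1 p.2 i = k := by rw [sum_subj _ _ h2, h1]; omega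
    have hco : co p.1 = co (subj p.1 p.2) * ((k:ℝ)+1) / ((subj p.1 p.2 p.2 : ℝ) + 1) := by
      have := co_addj (subj p.1 p.2) p.2
      rw [addj_subj p.1 p.2 h2, hsub] at this
      rw [this]
    rw [hco]
    have h3 : (subj p.1 p.2 p.2 : ℝ) + 1 = (p.1 p.2 : ℝ) := by
      have : subj p.1 p.2 p.2 + 1 = p.1 p.2 := by simp [subj]; omega
      exact_mod_cast congrArg (Nat.cast : ℕ → ℝ) this
    rw [h3]
    have h4 : (p.1 p.2 : ℝ) ≠ 0 := by exact_mod_cast h2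
    field_simp

lemma co_zero : co (fun _ : Fin d => 0) = 1 := by
  simp [co]

lemma sum_co [NeZero d] (k : ℕ) :
    ∑ ν ∈ Finset.Nat.antidiagonalTuple d k, co ν = (d:ℝ)^k := by
  induction k with
  | zero =>
      rw [Finset.Nat.antidiagonalTuple_zero_right, Finset.sum_singleton]
      have : co (0 : Fin d → ℕ) = 1 := co_zero
      rw [this, pow_zero]
  | succ k ih =>
      have := reindex (d := d) k (fun _ => 1)
      simp only [mul_one] at this
      rw [this, Finset.sum_congr rfl (fun ν _ => Finset.sum_const (co ν)), ]
      simp only [Finset.card_univ, Fintype.card_fin, nsmul_eq_mul]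
      rw [← Finset.mul_sum, ih]
      ring

lemma vpow_addj (v : Fin d → ℝ) (ν : Fin d → ℕ) (j : Fin d) :
    (∏ i, v i ^ (addj ν j i)) = (∏ i, v i ^ (ν i)) * v j := by
  unfold addj
  have : ∀ i : Fin d, v i ^ (ν i + if i = j then 1 else 0)
      = v i ^ (ν i) * (if i = j then v i else 1) := by
    intro i
    by_cases h : i = j <;> simp [h, pow_add]
  rw [Finset.prod_congr rfl (fun i _ => this i), Finset.prod_mul_distrib,
    Finset.prod_ite_eq' Finset.univ j (fun i => v i)]
  simp

lemma nat_ineq (hd : 0 < d) (m : ℕ) :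
    d ^ m ≤ Nat.factorial m * Nat.choose (m + d - 1) (d - 1) := by
  have h1 : d ^ m ≤ d.ascFactorial m := Nat.pow_succ_le_ascFactorial d m
  have h2 : d.ascFactorial m = Nat.factorial m * (d - 1 + m).choose m := by
    have := Nat.ascFactorial_eq_factorial_mul_choose (d-1) m
    rw [show d - 1 + 1 = d by omega] at this
    exact this
  have h3 : (d - 1 + m).choose m = (m + d - 1).choose (d-1) := by
    rw [show d - 1 + m = m + d - 1 by omega]
    rw [← Nat.choose_symm (by omega : d - 1 ≤ m + d - 1), show m + d - 1 - (d-1) = m by omega]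
  rw [h2, h3] at h1
  exact h1

lemma hasDerivAt_comp_line (h : Rd d → ℝ) (hh : Differentiable ℝ h) (x v : Rd d) (t : ℝ) :
    HasDerivAt (fun s => h (x + s • v)) (∑ j, v j * pd j h (x + t • v)) t := by
  have hγ : HasDerivAt (fun s : ℝ => x + s • v) v t := by
    have h1 : HasDerivAt (fun s : ℝ => s • v) ((1:ℝ) • v) t :=
      (hasDerivAt_id t).smul_const v
    rw [one_smul] at h1
    exact h1.const_add x
  have hc := (hh (x + t • v)).hasFDerivAt.comp_hasDerivAt t hγ
  have : fderiv ℝ h (x + t • v) v = ∑ j, v j * pd j h (x + t • v) := clm_eval _ v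
  rw [this] at hc
  exact hc

/-- the abstract one-dimensional iterated-MVT bound -/
lemma oneD (m : ℕ) (g : ℕ → ℝ → ℝ) (M : ℝ)
    (hderiv : ∀ k, k < m → ∀ t, HasDerivAt (g k) (g (k+1) t) t)
    (hbound : ∀ t ∈ Set.Icc (0:ℝ) 1, |g m t - g m 0| ≤ M) :
    |g 0 1 - ∑ k ∈ Finset.range (m+1), g k 0 / (Nat.factorial k : ℝ)| ≤
      M / (Nat.factorial m : ℝ) := by
  set ψ : ℕ → ℝ → ℝ :=
    fun k t => g k t - ∑ i ∈ Finset.range (m - k + 1),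
      g (k+i) 0 / (Nat.factorial i : ℝ) * t^i with hψ
  have hψm : ∀ t, ψ m t = g m t - g m 0 := by
    intro t; simp [hψ]
  have hψ0 : ∀ k, ψ k 0 = 0 := by
    intro k
    simp only [hψ]
    rw [Finset.sum_eq_single 0]
    · simp
    · intro i _ hi
      rcases Nat.exists_eq_succ_of_ne_zero hi with ⟨i', rfl⟩
      simp [zero_pow]
    · intro h
      exact absurd (Finset.mem_range.2 (by omega)) h
  have hψd : ∀ k, k < m → ∀ t, HasDerivAt (ψ k) (ψ (k+1) t) t := by
    intro k hk t
    have hpoly : HasDerivAt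
        (fun s => ∑ i ∈ Finset.range (m - k + 1),
          g (k+i) 0 / (Nat.factorial i : ℝ) * s^i)
        (∑ i ∈ Finset.range (m - (k+1) + 1),
          g ((k+1)+i) 0 / (Nat.factorial i : ℝ) * t^i) t := by
      have hterm : ∀ i ∈ Finset.range (m - k + 1),
          HasDerivAt (fun s => g (k+i) 0 / (Nat.factorial i : ℝ) * s^i)
            (g (k+i) 0 / (Nat.factorial i : ℝ) * ((i:ℝ) * t^(i-1))) t := by
        intro i _
        exact (hasDerivAt_pow i t).const_mul _
      have hsum := HasDerivAt.fun_sum hterm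
      have heq : (∑ i ∈ Finset.range (m - k + 1),
            g (k+i) 0 / (Nat.factorial i : ℝ) * ((i:ℝ) * t^(i-1)))
          = ∑ i ∈ Finset.range (m - (k+1) + 1),
            g ((k+1)+i) 0 / (Nat.factorial i : ℝ) * t^i := by
        rw [show m - k + 1 = (m - (k+1) + 1) + 1 by omega, Finset.sum_range_succ']
        have h0 : g (k+0) 0 / (Nat.factorial 0 : ℝ) * (((0:ℕ):ℝ) * t^(0-1)) = 0 := by simp
        rw [h0, add_zero]
        apply Finset.sum_congr rfl
        intro i _
        have hfac : ((Nat.factorial (i+1) : ℕ) : ℝ) = ((i:ℝ)+1) * (Nat.factorial i : ℝ) := by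
          rw [Nat.factorial_succ]; push_cast; ring
        rw [show (k+1)+i = k+(i+1) by omega, hfac]
        have hne : (Nat.factorial i : ℝ) ≠ 0 := by positivity
        push_cast
        field_simp
      rw [heq] at hsum
      exact hsum
    exact ((hderiv k hk t).sub hpoly)
  have hM0 : 0 ≤ M := by
    have := hbound 0 ⟨le_rfl, zero_le_one⟩
    simpa using (abs_nonneg _).trans this
  have main : ∀ j, j ≤ m → ∀ t ∈ Set.Icc (0:ℝ) 1,
      |ψ (m - j) t| ≤ M * t^j / (Nat.factorial j : ℝ) := by
    intro j
    induction j with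
    | zero =>
        intro _ t ht
        rw [Nat.sub_zero]
        rw [hψm t]
        simpa using hbound t ht
    | succ j IH =>
        intro hj t ht
        have hk : m - (j+1) < m := by omega
        have hk1 : m - (j+1) + 1 = m - j := by omega
        have key := image_norm_le_of_norm_deriv_right_le_deriv_boundary
          (f := ψ (m - (j+1))) (f' := ψ (m - (j+1) + 1)) (a := 0) (b := 1)
          (B := fun s => M * s^(j+1) / (Nat.factorial (j+1) : ℝ))
          (B' := fun s => M * s^j / (Nat.factorial j : ℝ))
          ?_ ?_ ?_ ?_ ?_
        · have := key ht
          simpa using this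
        · intro s _
          exact (hψd _ hk s).continuousAt.continuousWithinAt
        · intro s _
          exact (hψd _ hk s).hasDerivWithinAt
        · rw [hψ0]; simp [zero_pow]
        · intro s
          have h1 := ((hasDerivAt_pow (j+1) s).const_mul M).div_const
            ((Nat.factorial (j+1) : ℝ))
          refine h1.congr_deriv ?_
          have hfac : ((Nat.factorial (j+1) : ℕ) : ℝ) = ((j:ℝ)+1) * (Nat.factorial j : ℝ) := by
            rw [Nat.factorial_succ]; push_cast; ring
          rw [hfac]
          have hne : (Nat.factorial j : ℝ) ≠ 0 := by positivity
          push_cast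
          field_simp
        · intro s hs
          have hs' : s ∈ Set.Icc (0:ℝ) 1 := ⟨hs.1, hs.2.le⟩
          have := IH (by omega) s hs'
          rw [hk1]
          simpa using this
  have hfin := main m le_rfl 1 ⟨zero_le_one, le_rfl⟩
  rw [Nat.sub_self] at hfin
  have hψ01 : ψ 0 1 = g 0 1 - ∑ k ∈ Finset.range (m+1), g k 0 / (Nat.factorial k : ℝ) := by
    simp [hψ]
  rw [hψ01] at hfin
  simpa using hfin

end Stmt16Aux

/-- **Lemma 5.14** (Taylor approximation from Hölder continuity of top-order partial
derivatives). -/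
theorem stmt16 (d : ℕ) (hd : 0 < d) (β Cf : ℝ) (hβ : 0 < β) (hCf : 0 < Cf)
    (f : Rd d → ℝ) (hdiff : TimesDiffble d (ceilB β) f)
    (hHol : ∀ ν : Fin d → ℕ, (∑ j, ν j) = ceilB β - 1 →
      ∀ x x' : Rd d, |pderiv ν f x' - pderiv ν f x| ≤
        Cf * ‖x' - x‖ ^ (β - ((ceilB β - 1 : ℕ) : ℝ))) :
    ∀ x x' : Rd d, |f x' - taylorPoly β f x x'| ≤
      Cf * (Nat.choose (ceilB β - 1 + d - 1) (d - 1) : ℝ) * ‖x' - x‖ ^ β := by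
  classical
  haveI : NeZero d := ⟨hd.ne'⟩
  intro x x'
  have hceil_pos : 0 < ceilB β := Nat.ceil_pos.mpr hβ
  set m : ℕ := ceilB β - 1 with hmdef
  have hm1 : ceilB β = m + 1 := by omega
  have hmβ : (m : ℝ) < β := by
    by_contra hcon
    push_neg at hcon
    have : ceilB β ≤ m := Nat.ceil_le.mpr hcon
    omega
  have hdiff' : ∀ ν : Fin d → ℕ, (∑ j, ν j) ≤ m → Differentiable ℝ (pderiv ν f) := by
    intro ν h
    exact hdiff ν (by omega)
  by_cases hxx : x' = x
  · rw [hxx]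
    have h0 : taylorPoly β f x x = f x := by
      unfold taylorPoly
      refine (Finset.sum_eq_single (⟨fun _ => ⟨0, hceil_pos⟩, by simp⟩ : MIdx d β)
        ?_ ?_).trans ?_
      · intro ν _ hne
        have hex : ∃ j, (ν.1 j : ℕ) ≠ 0 := by
          by_contra hall
          push_neg at hall
          apply hne
          apply Subtype.ext
          funext j
          exact Fin.ext (hall j)
        obtain ⟨j, hj⟩ := hex
        have hzero : ((x j - x j)^((ν.1 j : ℕ)) / (Nat.factorial (ν.1 j : ℕ) : ℝ)) = 0 := by
          rw [sub_self, zero_pow hj, zero_div]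
        rw [Finset.prod_eq_zero (Finset.mem_univ j) hzero, zero_mul]
      · intro h
        exact absurd (Finset.mem_univ _) h
      · have e1 : pderiv (fun j : Fin d =>
            (((⟨fun _ => ⟨0, hceil_pos⟩, by simp⟩ : MIdx d β)).1 j : ℕ)) f = f :=
          Stmt16Aux.pderiv_zero f
        rw [e1]
        simp
    rw [h0, sub_self, abs_zero]
    positivity
  · set v : Rd d := x' - x with hvdef
    have hvpos : 0 < ‖v‖ := by
      rw [norm_pos_iff]
      exact sub_ne_zero.mpr hxx
    set g : ℕ → ℝ → ℝ := fun k t => ∑ ν ∈ Finset.Nat.antidiagonalTuple d k,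
      Stmt16Aux.co ν * (∏ j, v j ^ (ν j)) * pderiv ν f (x + t • v) with hgdef
    have hx0 : x + (0:ℝ) • v = x := by simp
    -- derivative chain
    have hgd : ∀ k, k < m → ∀ t, HasDerivAt (g k) (g (k+1) t) t := by
      intro k hk t
      have hterm : ∀ ν ∈ Finset.Nat.antidiagonalTuple d k,
          HasDerivAt (fun s => Stmt16Aux.co ν * (∏ j, v j ^ (ν j)) * pderiv ν f (x + s • v))
            (∑ j, Stmt16Aux.co ν * (∏ i, v i ^ (Stmt16Aux.addj ν j i)) *
              pderiv (Stmt16Aux.addj ν j) f (x + t • v)) t := by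
        intro ν hν
        have hsν : ∑ i, ν i = k := Finset.Nat.mem_antidiagonalTuple.1 hν
        have hdν : Differentiable ℝ (pderiv ν f) := hdiff' ν (by omega)
        have hline := (Stmt16Aux.hasDerivAt_comp_line (pderiv ν f) hdν x v t).const_mul
          (Stmt16Aux.co ν * ∏ j, v j ^ (ν j))
        refine hline.congr_deriv ?_
        rw [Finset.mul_sum]
        apply Finset.sum_congr rfl
        intro j _
        rw [Stmt16Aux.pd_pderiv f m hdiff' ν (by omega) j, Stmt16Aux.vpow_addj v ν j]
        ring
      have hsum := HasDerivAt.fun_sum hterm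
      have hgoal : g (k+1) t = ∑ ν ∈ Finset.Nat.antidiagonalTuple d k,
          ∑ j, Stmt16Aux.co ν * (∏ i, v i ^ (Stmt16Aux.addj ν j i)) *
            pderiv (Stmt16Aux.addj ν j) f (x + t • v) := by
        have hre := Stmt16Aux.reindex k (fun μ => (∏ i, v i ^ (μ i)) * pderiv μ f (x + t • v))
        have e1 : g (k+1) t = ∑ μ ∈ Finset.Nat.antidiagonalTuple d (k+1),
            Stmt16Aux.co μ * ((∏ i, v i ^ (μ i)) * pderiv μ f (x + t • v)) := by
          simp only [hgdef]
          apply Finset.sum_congr rfl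
          intro μ _
          ring
        rw [e1, hre]
        apply Finset.sum_congr rfl
        intro ν _
        apply Finset.sum_congr rfl
        intro j _
        ring
      rw [hgoal]
      exact hsum
    -- Taylor polynomial identification
    have htay : taylorPoly β f x x' = ∑ k ∈ Finset.range (m+1), g k 0 / (Nat.factorial k : ℝ) := by
      have e1 : ∀ k, g k 0 / (Nat.factorial k : ℝ)
          = ∑ ν ∈ Finset.Nat.antidiagonalTuple d k,
            (∏ j, v j ^ (ν j)) / (∏ j, (Nat.factorial (ν j) : ℝ)) * pderiv ν f x := by
        intro k
        simp only [hgdef, hx0]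
        rw [Finset.sum_div]
        apply Finset.sum_congr rfl
        intro ν hν
        have hsν : ∑ i, ν i = k := Finset.Nat.mem_antidiagonalTuple.1 hν
        unfold Stmt16Aux.co
        rw [hsν]
        have h1 : (Nat.factorial k : ℝ) ≠ 0 := by positivity
        have h2 : (∏ j, (Nat.factorial (ν j) : ℝ)) ≠ 0 := (Stmt16Aux.prodfact_pos ν).ne'
        field_simp
      rw [Finset.sum_congr rfl (fun k _ => e1 k)]
      rw [Finset.sum_sigma']
      unfold taylorPoly
      refine Finset.sum_bij (i := fun (ν : MIdx d β) _ =>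
        (⟨∑ i, (ν.1 i : ℕ), fun i => (ν.1 i : ℕ)⟩ : Σ _ : ℕ, Fin d → ℕ)) ?_ ?_ ?_ ?_
      · intro ν _
        refine Finset.mem_sigma.mpr ⟨Finset.mem_range.mpr ?_, 
          Finset.Nat.mem_antidiagonalTuple.mpr rfl⟩
        show (∑ i, ((ν.1 i : ℕ))) < m + 1
        have := ν.2
        omega
      · intro a _ b _ hab
        have h2 := congrArg (fun (p : Σ _ : ℕ, Fin d → ℕ) => p.2) hab
        simp only at h2
        apply Subtype.ext
        funext i
        exact Fin.ext (congrFun h2 i)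
      · intro p hp
        rw [Finset.mem_sigma] at hp
        obtain ⟨hp1, hp2⟩ := hp
        rw [Finset.mem_range] at hp1
        rw [Finset.Nat.mem_antidiagonalTuple] at hp2
        have hlt : ∀ i, p.2 i < ceilB β := by
          intro i
          have : p.2 i ≤ ∑ i', p.2 i' :=
            Finset.single_le_sum (fun i' _ => Nat.zero_le _) (Finset.mem_univ i)
          omega
        refine ⟨⟨fun i => ⟨p.2 i, hlt i⟩, ?_⟩, Finset.mem_univ _, ?_⟩
        · show (∑ j, p.2 j) ≤ ceilB β - 1
          omega
        · refine Sigma.ext ?_ ?_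
          · show (∑ i, p.2 i) = p.1
            exact hp2
          · simp
      · intro ν _
        have hprod : (∏ j, (x' j - x j) ^ ((ν.1 j : ℕ)) / (Nat.factorial (ν.1 j : ℕ) : ℝ))
            = (∏ j, v j ^ ((ν.1 j : ℕ))) / (∏ j, (Nat.factorial (ν.1 j : ℕ) : ℝ)) := by
          rw [← Finset.prod_div_distrib]
          rfl
        rw [hprod]
    -- Hölder bound for the top derivative along the segment
    set M : ℝ := Cf * (d:ℝ)^m * ‖v‖ ^ β with hMdef
    have hold : ∀ t ∈ Set.Icc (0:ℝ) 1, |g m t - g m 0| ≤ M := by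
      intro t ht
      simp only [hgdef, hx0]
      rw [← Finset.sum_sub_distrib]
      refine (Finset.abs_sum_le_sum_abs _ _).trans ?_
      have hterm : ∀ ν ∈ Finset.Nat.antidiagonalTuple d m,
          |Stmt16Aux.co ν * (∏ j, v j ^ (ν j)) * pderiv ν f (x + t • v)
            - Stmt16Aux.co ν * (∏ j, v j ^ (ν j)) * pderiv ν f x|
          ≤ Stmt16Aux.co ν * (Cf * ‖v‖ ^ β) := by
        intro ν hν
        have hsν : ∑ i, ν i = m := Finset.Nat.mem_antidiagonalTuple.1 hν
        have hco := Stmt16Aux.co_pos ν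
        rw [← mul_sub, abs_mul, abs_mul]
        rw [abs_of_pos hco]
        have h1 : |∏ j, v j ^ (ν j)| ≤ ‖v‖ ^ (m:ℕ) := by
          rw [Finset.abs_prod]
          have hle : ∀ j ∈ Finset.univ, |v j ^ (ν j)| ≤ ‖v‖ ^ (ν j) := by
            intro j _
            rw [abs_pow]
            apply pow_le_pow_left₀ (abs_nonneg _)
            rw [← Real.norm_eq_abs]
            exact norm_le_pi_norm v j
          refine (Finset.prod_le_prod (fun j _ => abs_nonneg _) hle).trans ?_
          rw [Finset.prod_pow_eq_pow_sum, hsν]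
        have h2 : |pderiv ν f (x + t • v) - pderiv ν f x| ≤ Cf * ‖v‖ ^ (β - (m:ℝ)) := by
          have hH := hHol ν (by omega) x (x + t • v)
          have hst : (x + t • v) - x = t • v := by
            abel
          rw [hst, norm_smul, Real.norm_eq_abs] at hH
          refine hH.trans ?_
          apply mul_le_mul_of_nonneg_left _ hCf.le
          apply Real.rpow_le_rpow (by positivity) _ (by linarith)
          have habs : |t| ≤ 1 := abs_le.2 ⟨by linarith [ht.1], ht.2⟩
          nlinarith [norm_nonneg v]
        calc Stmt16Aux.co ν * |∏ j, v j ^ (ν j)| *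
              |pderiv ν f (x + t • v) - pderiv ν f x|
            ≤ Stmt16Aux.co ν * ‖v‖ ^ (m:ℕ) * (Cf * ‖v‖ ^ (β - (m:ℝ))) := by
              apply mul_le_mul (mul_le_mul_of_nonneg_left h1 hco.le) h2 (abs_nonneg _)
                (by positivity)
          _ = Stmt16Aux.co ν * (Cf * ‖v‖ ^ β) := by
              rw [← Real.rpow_natCast ‖v‖ m, ← mul_assoc]
              rw [show Stmt16Aux.co ν * ‖v‖ ^ ((m:ℕ):ℝ) * Cf = Stmt16Aux.co ν * Cf * ‖v‖ ^ ((m:ℕ):ℝ) by ring]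
              rw [mul_assoc, ← Real.rpow_add hvpos]
              rw [show ((m:ℕ):ℝ) + (β - (m:ℝ)) = β by push_cast; ring]
              ring
      refine (Finset.sum_le_sum hterm).trans ?_
      rw [← Finset.sum_mul, Stmt16Aux.sum_co, hMdef]
      ring_nf
      exact le_refl _
    -- conclude
    have hone := Stmt16Aux.oneD m g M hgd hold
    have hg01 : g 0 1 = f x' := by
      simp only [hgdef]
      rw [Finset.Nat.antidiagonalTuple_zero_right, Finset.sum_singleton]
      have e1 : pderiv (0 : Fin d → ℕ) f = f := Stmt16Aux.pderiv_zero f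
      rw [e1]
      have e2 : Stmt16Aux.co (0 : Fin d → ℕ) = 1 := Stmt16Aux.co_zero
      rw [e2]
      have e3 : x + (1:ℝ) • v = x' := by
        rw [one_smul, hvdef]
        abel
      rw [e3]
      simp
    rw [hg01, ← htay] at hone
    refine hone.trans ?_
    rw [div_le_iff₀ (by positivity : (0:ℝ) < (Nat.factorial m : ℝ))]
    have hnat := Stmt16Aux.nat_ineq hd m
    have hnatR : ((d:ℝ))^m ≤ (Nat.factorial m : ℝ) * (Nat.choose (m + d - 1) (d-1) : ℝ) := by
      exact_mod_cast hnat
    calc M = (Cf * ‖v‖ ^ β) * (d:ℝ)^m := by rw [hMdef]; ring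
      _ ≤ (Cf * ‖v‖ ^ β) * ((Nat.factorial m : ℝ) * (Nat.choose (m + d - 1) (d-1) : ℝ)) := by
          apply mul_le_mul_of_nonneg_left hnatR
          positivity
      _ = Cf * (Nat.choose (m + d - 1) (d-1) : ℝ) * ‖v‖ ^ β * (Nat.factorial m : ℝ) := by
          ring

end
end

section
/- Given d ∈ ℕ, β ∈ (0,∞) and a ∈ (0,1), let 𝒦(a) denote the set of Lebesgue-measurable sets K ⊆ B̄_∞(0,1) with ℒ_d(K) ≥ a. Then c_min(d,β,a) := 1 ∧ inf_{K ∈ 𝒦(a)} λ_min( ∫_K Φ_{0,1}^β(z) Φ_{0,1}^β(z)ᵀ dℒ_d(z) ) > 0; equivalently, there exists c > 0 such that for every K ∈ 𝒦(a) and every w ∈ ℝ^{𝒱(β)} with ‖w‖₂ = 1, ∫_K ⟨w, Φ_{0,1}^β(z)⟩² dℒ_d(z) ≥ c. -/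
open MeasureTheory
open scoped BigOperators Classical ENNReal

noncomputable section

/-- The monomial vector `Φ_{0,1}^β(z) = (z^ν)_{ν ∈ 𝒱(β)}`. -/
noncomputable def Phi01 {d : ℕ} (β : ℝ) (z : Rd d) : MIdx d β → ℝ :=
  fun ν => ∏ j, (z j) ^ ((ν.1 j : ℕ))

open MvPolynomial in
theorem mv_zero_set_null : ∀ (d : ℕ) (p : MvPolynomial (Fin d) ℝ), p ≠ 0 →
    volume {z : Fin d → ℝ | MvPolynomial.eval z p = 0} = 0 := by
  intro d
  induction d with
  | zero =>
    intro p hp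
    obtain ⟨c, rfl⟩ := MvPolynomial.C_surjective (Fin 0) p
    have hc : c ≠ 0 := fun h => hp (by simp [h])
    have : {z : Fin 0 → ℝ | MvPolynomial.eval z (MvPolynomial.C c) = 0} = ∅ := by
      ext z; simp [hc]
    rw [this]; simp
  | succ n ih =>
    intro p hp
    set q := MvPolynomial.finSuccEquiv ℝ n p with hq
    have hq0 : q ≠ 0 := by simp [hq, hp]
    set l := q.leadingCoeff with hl
    have hl0 : l ≠ 0 := Polynomial.leadingCoeff_ne_zero.mpr hq0
    set E : Set (Fin (n+1) → ℝ) := {z | MvPolynomial.eval z p = 0} with hE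
    have hEm : MeasurableSet E := by
      have hc : Continuous fun z : Fin (n+1) → ℝ => MvPolynomial.eval z p := by
        continuity
      exact hc.measurable (MeasurableSet.singleton 0)
    set e := MeasurableEquiv.piFinSuccAbove (fun _ : Fin (n+1) => ℝ) 0 with he
    have hmp := measurePreserving_piFinSuccAbove (fun _ : Fin (n+1) => (volume : Measure ℝ)) 0
    -- volume E = (volume.prod volume) (e.symm ⁻¹' E)
    have h1 : (volume : Measure (Fin (n+1) → ℝ)) E
        = ((volume : Measure ℝ).prod (volume : Measure (Fin n → ℝ))) (e.symm ⁻¹' E) := by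
      have h2 := hmp.measure_preimage (s := e.symm ⁻¹' E)
        ((hEm.preimage e.symm.measurable).nullMeasurableSet)
      rw [volume_pi, (volume_pi : (volume : Measure (Fin n → ℝ)) = _), ← h2]
      congr 1
      rw [Set.preimage_preimage]
      ext z
      simp only [Set.mem_preimage]
      show z ∈ E ↔ e.symm (e z) ∈ E
      rw [e.symm_apply_apply]
    rw [h1]
    -- swap to ((Fin n → ℝ) × ℝ)
    have h3 : ((volume : Measure ℝ).prod (volume : Measure (Fin n → ℝ))) (e.symm ⁻¹' E)
        = ((volume : Measure (Fin n → ℝ)).prod (volume : Measure ℝ)) (Prod.swap ⁻¹' (e.symm ⁻¹' E)) := by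
      rw [← Measure.prod_swap]
      rw [Measure.map_apply measurable_swap (hEm.preimage e.symm.measurable)]
    rw [h3]
    rw [Measure.measure_prod_null ((hEm.preimage e.symm.measurable).preimage measurable_swap)]
    -- a.e. s, the slice in a is the root set of a nonzero 1-variable polynomial
    have hN := ih l hl0
    rw [Filter.EventuallyEq, ae_iff]
    refine measure_mono_null ?_ hN
    intro s hs
    simp only [Set.mem_setOf_eq] at hs ⊢
    by_contra hls
    apply hs
    -- slice: {a | (a, s) ∈ e.symm ⁻¹' E}
    have hslice : (Prod.mk s ⁻¹' (Prod.swap ⁻¹' (e.symm ⁻¹' E)))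
        = {a : ℝ | Polynomial.eval a (Polynomial.map (MvPolynomial.eval s) q) = 0} := by
      ext a
      simp only [Set.mem_preimage, Set.mem_setOf_eq, Prod.swap_prod_mk]
      have hcons : e.symm (a, s) = Fin.cons a s := by
        simp [he, MeasurableEquiv.piFinSuccAbove, Fin.insertNthEquiv, Fin.insertNth_zero]
      rw [hcons]
      simp only [hE, Set.mem_setOf_eq]
      rw [MvPolynomial.eval_eq_eval_mv_eval' s a p, ← hq]
    rw [hslice]
    have hmap0 : Polynomial.map (MvPolynomial.eval s) q ≠ 0 := by
      intro h0
      apply hls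
      have := congrArg (fun r => Polynomial.coeff r q.natDegree) h0
      simpa [Polynomial.coeff_map] using this
    have hfin := Polynomial.finite_setOf_isRoot (R := ℝ) hmap0
    exact hfin.measure_zero _


/-- the exponent Finsupp of a multi-index -/
def midxF {d : ℕ} {β : ℝ} (ν : MIdx d β) : Fin d →₀ ℕ :=
  Finsupp.equivFunOnFinite.symm (fun j => (ν.1 j : ℕ))

lemma midxF_inj {d : ℕ} {β : ℝ} : Function.Injective (midxF (d := d) (β := β)) := by
  intro ν μ h
  have h2 : ∀ j, (ν.1 j : ℕ) = (μ.1 j : ℕ) := fun j => by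
    have := congrArg (fun f => f j) h
    simpa [midxF] using this
  have : ν.1 = μ.1 := funext fun j => Fin.ext (h2 j)
  exact Subtype.ext this

/-- the polynomial associated to a coefficient vector -/
def pw {d : ℕ} (β : ℝ) (w : MIdx d β → ℝ) : MvPolynomial (Fin d) ℝ :=
  ∑ ν, MvPolynomial.monomial (midxF ν) (w ν)

lemma eval_pw {d : ℕ} (β : ℝ) (w : MIdx d β → ℝ) (z : Rd d) :
    MvPolynomial.eval z (pw β w) = ∑ ν, w ν * Phi01 β z ν := by
  unfold pw
  rw [map_sum]
  refine Finset.sum_congr rfl fun ν _ => ?_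
  rw [MvPolynomial.eval_monomial]
  congr 1
  rw [Finsupp.prod_fintype]
  · rfl
  · intro j; rfl

lemma pw_ne_zero {d : ℕ} (β : ℝ) (w : MIdx d β → ℝ) (hw : w ≠ 0) : pw β w ≠ 0 := by
  obtain ⟨ν₀, hν₀⟩ : ∃ ν₀, w ν₀ ≠ 0 := by
    by_contra h
    push_neg at h
    exact hw (funext h)
  intro h0
  apply hν₀
  have : MvPolynomial.coeff (midxF ν₀) (pw β w) = w ν₀ := by
    unfold pw
    rw [MvPolynomial.coeff_sum]
    rw [Finset.sum_eq_single ν₀]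
    · simp [MvPolynomial.coeff_monomial]
    · intro ν _ hne
      rw [MvPolynomial.coeff_monomial, if_neg (fun h => hne (midxF_inj h))]
    · simp
  rw [← this, h0]
  simp

lemma phi_le_one {d : ℕ} (β : ℝ) (z : Rd d) (hz : z ∈ Metric.closedBall (0 : Rd d) 1)
    (ν : MIdx d β) : |Phi01 β z ν| ≤ 1 := by
  rw [mem_closedBall_zero_iff] at hz
  unfold Phi01
  rw [Finset.abs_prod]
  refine Finset.prod_le_one (fun j _ => abs_nonneg _) (fun j _ => ?_)
  rw [abs_pow]
  refine pow_le_one₀ (abs_nonneg _) ?_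
  calc |z j| = ‖z j‖ := rfl
    _ ≤ ‖z‖ := norm_le_pi_norm z j
    _ ≤ 1 := hz

set_option maxHeartbeats 2000000 in
/-- **Lemma 5.6** (uniform positive-definiteness of local design second-moment matrices):
for every measurable `K ⊆ B̄_∞(0,1)` of Lebesgue measure at least `a`, the quadratic form
`w ↦ ∫_K ⟨w, Φ_{0,1}^β(z)⟩² dz` is bounded below by `c > 0` on the Euclidean unit sphere. -/
theorem stmt17 (d : ℕ) (hd : 0 < d) (β : ℝ) (hβ : 0 < β) (a : ℝ)
    (ha : a ∈ Set.Ioo (0:ℝ) 1) :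
    ∃ c : ℝ, 0 < c ∧
      ∀ K : Set (Rd d), MeasurableSet K → K ⊆ Metric.closedBall 0 1 →
        ENNReal.ofReal a ≤ MeasureTheory.volume K →
        ∀ w : MIdx d β → ℝ, (∑ ν, (w ν) ^ 2) = 1 →
          c ≤ ∫ z in K, (∑ ν, w ν * Phi01 β z ν) ^ 2 ∂(MeasureTheory.volume) := by
  classical
  set B := Metric.closedBall (0 : Rd d) 1 with hB
  have hBc : IsCompact B := isCompact_closedBall 0 1
  have hBm : MeasurableSet B := measurableSet_closedBall
  have hBfin : volume B ≠ ∞ := hBc.measure_lt_top.ne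
  set N : ℝ := (Fintype.card (MIdx d β) : ℝ) with hN
  have hN0 : 0 ≤ N := Nat.cast_nonneg _
  -- continuity of the integrand
  have hcont : ∀ w : MIdx d β → ℝ, Continuous fun z : Rd d => (∑ ν, w ν * Phi01 β z ν) ^ 2 := by
    intro w
    apply Continuous.pow
    apply continuous_finset_sum
    intro ν _
    apply Continuous.mul continuous_const
    apply continuous_finset_prod
    intro j _
    exact (continuous_apply j).pow _
  have hint : ∀ (w : MIdx d β → ℝ) (K : Set (Rd d)), K ⊆ B →
      IntegrableOn (fun z => (∑ ν, w ν * Phi01 β z ν) ^ 2) K volume := by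
    intro w K hK
    exact (((hcont w).continuousOn).integrableOn_compact hBc).mono_set hK
  -- bounds on ball for sphere vectors
  have hwle : ∀ w : MIdx d β → ℝ, (∑ ν, (w ν) ^ 2) = 1 → ∀ ν, |w ν| ≤ 1 := by
    intro w hw ν
    have h : w ν ^ 2 ≤ 1 := by
      rw [← hw]
      exact Finset.single_le_sum (f := fun ν => w ν ^ 2) (fun i _ => sq_nonneg _)
        (Finset.mem_univ ν)
    rw [abs_le]
    constructor <;> nlinarith
  have hsumle : ∀ (v : MIdx d β → ℝ) (z : Rd d), z ∈ B →
      |∑ ν, v ν * Phi01 β z ν| ≤ ∑ ν, |v ν| := by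
    intro v z hz
    refine (Finset.abs_sum_le_sum_abs _ _).trans ?_
    refine Finset.sum_le_sum fun ν _ => ?_
    rw [abs_mul]
    calc |v ν| * |Phi01 β z ν| ≤ |v ν| * 1 :=
          mul_le_mul_of_nonneg_left (phi_le_one β z hz ν) (abs_nonneg _)
      _ = |v ν| := mul_one _
  -- by contradiction
  by_contra hcon
  push_neg at hcon
  have hchoose : ∀ n : ℕ, ∃ K : Set (Rd d), MeasurableSet K ∧ K ⊆ B ∧
      ENNReal.ofReal a ≤ volume K ∧ ∃ w : MIdx d β → ℝ, (∑ ν, (w ν) ^ 2) = 1 ∧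
        (∫ z in K, (∑ ν, w ν * Phi01 β z ν) ^ 2 ∂volume) < 1 / (n + 1) := by
    intro n
    obtain ⟨K, hK1, hK2, hK3, w, hw1, hw2⟩ := hcon (1 / (n + 1)) (by positivity)
    exact ⟨K, hK1, hK2, hK3, w, hw1, hw2⟩
  choose K hKm hKB hKa w hwS hwI using hchoose
  -- compactness of the sphere
  set S : Set (MIdx d β → ℝ) := {v | (∑ ν, (v ν) ^ 2) = 1} with hS
  have hScl : IsClosed S := by
    have : Continuous fun v : MIdx d β → ℝ => ∑ ν, (v ν) ^ 2 := by
      apply continuous_finset_sum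
      intro ν _
      exact (continuous_apply ν).pow 2
    have hpre : S = (fun v : MIdx d β → ℝ => ∑ ν, (v ν) ^ 2) ⁻¹' {1} := by
      ext v; simp [hS]
    rw [hpre]
    exact isClosed_singleton.preimage this
  have hSsub : S ⊆ Metric.closedBall 0 1 := by
    intro v hv
    rw [mem_closedBall_zero_iff]
    rw [pi_norm_le_iff_of_nonneg zero_le_one]
    intro ν
    exact hwle v hv ν
  have hScomp : IsCompact S := (isCompact_closedBall 0 1).of_isClosed_subset hScl hSsub
  obtain ⟨ws, hwsS, φ, hφ, hconv⟩ := hScomp.tendsto_subseq (fun n => hwS n)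
  -- the limit polynomial
  have hws0 : ws ≠ 0 := by
    intro h
    have := hwsS
    rw [hS, Set.mem_setOf_eq, h] at this
    simp at this
  have hp0 : pw β ws ≠ 0 := pw_ne_zero β ws hws0
  -- choose a sublevel threshold
  set f : Rd d → ℝ := fun z => (∑ ν, ws ν * Phi01 β z ν) ^ 2 with hf
  have hfm : ∀ t : ℝ, MeasurableSet {z : Rd d | f z ≤ t} := fun t =>
    measurableSet_le (hcont ws).measurable measurable_const
  set Z : ℕ → Set (Rd d) := fun m => B ∩ {z | f z ≤ 1 / (m + 1)} with hZ
  have hZanti : Antitone Z := by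
    intro i j hij
    apply Set.inter_subset_inter_right
    intro z hzz
    simp only [Set.mem_setOf_eq] at hzz ⊢
    refine hzz.trans ?_
    apply one_div_le_one_div_of_le (by positivity)
    exact_mod_cast Nat.add_le_add_right hij 1
  have hZnull : volume (⋂ m, Z m) = 0 := by
    refine measure_mono_null ?_ (mv_zero_set_null d (pw β ws) hp0)
    intro z hzz
    simp only [Set.mem_iInter, hZ, Set.mem_inter_iff, Set.mem_setOf_eq] at hzz
    have h1 : f z ≤ 0 := by
      refine ge_of_tendsto tendsto_one_div_add_atTop_nhds_zero_nat ?_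
      exact Filter.Eventually.of_forall fun m => (hzz m).2
    have h2 : f z = 0 := le_antisymm h1 (sq_nonneg _)
    have : (∑ ν, ws ν * Phi01 β z ν) = 0 := by
      exact pow_eq_zero_iff (by norm_num) |>.mp h2
    simp only [Set.mem_setOf_eq, eval_pw]
    exact this
  have hZtend : Filter.Tendsto (fun m => volume (Z m)) Filter.atTop (nhds 0) := by
    rw [← hZnull]
    refine tendsto_measure_iInter_atTop ?_ hZanti ⟨0, ?_⟩
    · exact fun m => ((hBm.inter (hfm _)).nullMeasurableSet)
    · exact ((measure_mono Set.inter_subset_left).trans_lt hBfin.lt_top).ne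
  have ha2 : (0:ℝ) < a / 2 := by linarith [ha.1]
  obtain ⟨m, hm⟩ : ∃ m, volume (Z m) ≤ ENNReal.ofReal (a / 2) := by
    obtain ⟨m, hm⟩ := (hZtend.eventually_lt_const
      (by simp [ENNReal.ofReal_pos, ha2] : (0:ℝ≥0∞) < ENNReal.ofReal (a/2))).exists
    exact ⟨m, hm.le⟩
  set t : ℝ := 1 / (m + 1) with ht
  have ht0 : 0 < t := by positivity
  -- lower bound on each K n
  have hlow : ∀ n : ℕ, t * (a / 2) ≤ ∫ z in K n, f z ∂volume := by
    intro n
    set A : Set (Rd d) := K n \ Z m with hA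
    have hAm : MeasurableSet A := (hKm n).diff (hBm.inter (hfm _))
    have hAB : A ⊆ B := fun z hzz => hKB n hzz.1
    have hAfin : volume A ≠ ∞ := ((measure_mono hAB).trans_lt hBfin.lt_top).ne
    have hAvol : ENNReal.ofReal (a / 2) ≤ volume A := by
      have h1 : volume (K n) - volume (Z m) ≤ volume A := le_measure_diff
      refine le_trans ?_ h1
      have : ENNReal.ofReal a - ENNReal.ofReal (a/2) ≤ volume (K n) - volume (Z m) :=
        tsub_le_tsub (hKa n) hm
      refine le_trans ?_ this
      rw [← ENNReal.ofReal_sub _ (le_of_lt ha2)]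
      exact ENNReal.ofReal_le_ofReal (by linarith)
    have hAf : ∀ z ∈ A, t ≤ f z := by
      intro z hzz
      have hz1 : z ∈ B := hKB n hzz.1
      have hz2 := hzz.2
      simp only [hZ, Set.mem_inter_iff, Set.mem_setOf_eq, not_and, not_le] at hz2
      exact (hz2 hz1).le
    have h1 : t * (volume A).toReal ≤ ∫ z in A, f z ∂volume :=
      setIntegral_ge_of_const_le_real hAm hAfin hAf ((hint ws (K n) (hKB n)).mono_set Set.diff_subset)
    have h2 : a / 2 ≤ (volume A).toReal := by
      have := ENNReal.toReal_mono hAfin hAvol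
      rwa [ENNReal.toReal_ofReal (le_of_lt ha2)] at this
    have h3 : (∫ z in A, f z ∂volume) ≤ ∫ z in K n, f z ∂volume := by
      apply setIntegral_mono_set (hint ws (K n) (hKB n))
      · exact Filter.Eventually.of_forall fun z => sq_nonneg _
      · exact HasSubset.Subset.eventuallyLE Set.diff_subset
    calc t * (a/2) ≤ t * (volume A).toReal := by
          exact mul_le_mul_of_nonneg_left h2 ht0.le
      _ ≤ ∫ z in A, f z ∂volume := h1
      _ ≤ _ := h3
  -- upper bound on each K (φ n)
  set C : ℝ := 2 * N * N with hC
  have hup : ∀ n : ℕ, (∫ z in K (φ n), f z ∂volume)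
      ≤ 1 / (φ n + 1) + C * dist ws (w (φ n)) * (volume B).toReal := by
    intro n
    set v := w (φ n) with hv
    set δ := dist ws v with hδ
    have hδ0 : 0 ≤ δ := dist_nonneg
    have hpt : ∀ z ∈ K (φ n), f z ≤ (∑ ν, v ν * Phi01 β z ν) ^ 2 + C * δ := by
      intro z hz
      have hzB : z ∈ B := hKB (φ n) hz
      set Av := ∑ ν, ws ν * Phi01 β z ν with hAv
      set Bv := ∑ ν, v ν * Phi01 β z ν with hBv
      have hA : |Av| ≤ N := by
        refine (hsumle ws z hzB).trans ?_
        calc ∑ ν, |ws ν| ≤ ∑ _ν : MIdx d β, (1:ℝ) :=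
              Finset.sum_le_sum fun ν _ => hwle ws hwsS ν
          _ = N := by simp [hN]
      have hBb : |Bv| ≤ N := by
        refine (hsumle v z hzB).trans ?_
        calc ∑ ν, |v ν| ≤ ∑ _ν : MIdx d β, (1:ℝ) :=
              Finset.sum_le_sum fun ν _ => hwle v (hwS (φ n)) ν
          _ = N := by simp [hN]
      have hD : |Av - Bv| ≤ N * δ := by
        have hsub : Av - Bv = ∑ ν, (ws ν - v ν) * Phi01 β z ν := by
          rw [hAv, hBv, ← Finset.sum_sub_distrib]
          exact Finset.sum_congr rfl fun ν _ => (sub_mul _ _ _).symm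
        rw [hsub]
        refine (hsumle _ z hzB).trans ?_
        calc ∑ ν, |ws ν - v ν| ≤ ∑ _ν : MIdx d β, δ := by
              refine Finset.sum_le_sum fun ν _ => ?_
              rw [← Real.dist_eq]
              exact dist_le_pi_dist ws v ν
          _ = N * δ := by simp [hN, Finset.sum_const, nsmul_eq_mul]
      have h5 : (Av - Bv) * (Av + Bv) ≤ |Av - Bv| * |Av + Bv| := by
        rw [← abs_mul]
        exact le_abs_self _
      have h6 : |Av + Bv| ≤ 2 * N := (abs_add_le _ _).trans (by linarith)
      have h7 : |Av - Bv| * |Av + Bv| ≤ (N * δ) * (2 * N) :=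
        mul_le_mul hD h6 (abs_nonneg _) (by positivity)
      have hfz : f z = Bv ^ 2 + (Av - Bv) * (Av + Bv) := by
        simp only [hf]
        ring
      rw [hfz]
      have : (N * δ) * (2 * N) = C * δ := by rw [hC]; ring
      linarith
    have hint1 : IntegrableOn (fun z => (∑ ν, v ν * Phi01 β z ν) ^ 2) (K (φ n)) volume :=
      hint v (K (φ n)) (hKB (φ n))
    have hKfin : volume (K (φ n)) ≠ ∞ :=
      ((measure_mono (hKB (φ n))).trans_lt hBfin.lt_top).ne
    have hintc : IntegrableOn (fun _ : Rd d => C * δ) (K (φ n)) volume := by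
      exact integrableOn_const hKfin
    have h4 : (∫ z in K (φ n), f z ∂volume)
        ≤ ∫ z in K (φ n), ((∑ ν, v ν * Phi01 β z ν) ^ 2 + C * δ) ∂volume :=
      setIntegral_mono_on (hint ws (K (φ n)) (hKB (φ n))) (hint1.add hintc) (hKm (φ n)) hpt
    rw [integral_add hint1 hintc, setIntegral_const] at h4
    refine h4.trans ?_
    have hb1 : (∫ z in K (φ n), (∑ ν, v ν * Phi01 β z ν) ^ 2 ∂volume) ≤ 1 / (φ n + 1) :=
      (hwI (φ n)).le
    have hb2 : volume.real (K (φ n)) • (C * δ) ≤ C * δ * (volume B).toReal := by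
      rw [smul_eq_mul, mul_comm]
      refine mul_le_mul_of_nonneg_left ?_ (by positivity)
      exact ENNReal.toReal_mono hBfin (measure_mono (hKB (φ n)))
    linarith
  -- conclude
  have htend : Filter.Tendsto
      (fun n => 1 / ((φ n : ℝ) + 1) + C * dist ws (w (φ n)) * (volume B).toReal)
      Filter.atTop (nhds 0) := by
    have h1 : Filter.Tendsto (fun n => 1 / ((φ n : ℝ) + 1)) Filter.atTop (nhds 0) := by
      apply Filter.Tendsto.comp tendsto_one_div_add_atTop_nhds_zero_nat hφ.tendsto_atTop
    have h2 : Filter.Tendsto (fun n => dist ws (w (φ n))) Filter.atTop (nhds 0) := by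
      rw [tendsto_iff_dist_tendsto_zero] at hconv
      refine hconv.congr fun n => ?_
      simp [Function.comp, dist_comm]
    have h3 : Filter.Tendsto (fun n => C * dist ws (w (φ n)) * (volume B).toReal)
        Filter.atTop (nhds 0) := by
      have := (h2.const_mul C).mul_const (volume B).toReal
      simpa using this
    simpa using h1.add h3
  have hfinal : t * (a / 2) ≤ 0 := by
    refine ge_of_tendsto htend ?_
    refine Filter.Eventually.of_forall fun n => ?_
    exact (hlow (φ n)).trans (hup n)
  nlinarith


end
end

section
/- Let P₁,…,P_M and Q₁,…,Q_M be probability measures on a measurable space (Ω,ℱ), and let A₁,…,A_M ∈ ℱ. Write p̄ := M^{-1}Σ_{j=1}^M P_j(A_j) and q̄ := M^{-1}Σ_{j=1}^M Q_j(A_j). If q̄ ∈ (0,1), then p̄ ≤ q̄ + √( M^{-1}Σ_{j=1}^M χ²(P_j,Q_j) · q̄(1−q̄) ). In particular, if M ≥ 2 and A₁,…,A_M form a partition of Ω, then M^{-1}Σ_{j=1}^M P_j(A_j) ≤ 1/M + √( inf_Q M^{-1}Σ_{j=1}^M χ²(P_j,Q) · (1/M)(1 − 1/M) ), where the infimum is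 over all probability measures Q on (Ω,ℱ). -/
open MeasureTheory
open scoped BigOperators ENNReal Classical

noncomputable section

/-- The `χ²`-divergence `χ²(P,Q) = ∫ (dP/dQ)² dQ - 1` (`∞` if `P` is not absolutely
continuous with respect to `Q`). -/
noncomputable def chiSq {Ω : Type*} [MeasurableSpace Ω] (P Q : Measure Ω) : ℝ≥0∞ :=
  if P ≪ Q then (∫⁻ ω, (P.rnDeriv Q ω) ^ 2 ∂Q) - 1 else ⊤

lemma key {Ω : Type*} [MeasurableSpace Ω] (P Q : Measure Ω)
    [IsProbabilityMeasure P] [IsProbabilityMeasure Q] (hPQ : P ≪ Q)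
    (hfin : chiSq P Q ≠ ⊤) {A : Set Ω} (hA : MeasurableSet A) :
    |(P A).toReal - (Q A).toReal| ≤
      Real.sqrt ((chiSq P Q).toReal * ((Q A).toReal * (1 - (Q A).toReal))) := by
  set f := P.rnDeriv Q with hf
  have hI : (∫⁻ ω, f ω ^ 2 ∂Q) ≠ ⊤ := by
    intro h
    rw [chiSq, if_pos hPQ, h] at hfin
    simp at hfin
  set g : Ω → ℝ := fun ω => (f ω).toReal with hg
  set q : ℝ := (Q A).toReal with hqdef
  set p : ℝ := (P A).toReal with hpdef
  have hfm : Measurable f := Measure.measurable_rnDeriv P Q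
  have hg2 : Integrable (fun ω => g ω ^ 2) Q := by
    have := integrable_toReal_of_lintegral_ne_top ((hfm.pow_const 2).aemeasurable) hI
    refine this.congr (Filter.Eventually.of_forall fun ω => ?_)
    simp [g, ENNReal.toReal_pow]
  have hgm : AEStronglyMeasurable g Q := (hfm.ennreal_toReal).aestronglyMeasurable
  have hgmem : MemLp g 2 Q := (memLp_two_iff_integrable_sq hgm).2 hg2
  have hgint : Integrable g Q := hgmem.integrable (by norm_num)
  have hgone : ∫ ω, g ω ∂Q = 1 := by
    rw [Measure.integral_toReal_rnDeriv hPQ]; simp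
  have hgA : ∫ ω in A, g ω ∂Q = p := Measure.setIntegral_toReal_rnDeriv hPQ A
  set h : Ω → ℝ := fun ω => g ω - 1 with hh
  set k : Ω → ℝ := fun ω => A.indicator (fun _ => (1:ℝ)) ω - q with hk
  have hhmem : MemLp h 2 Q := hgmem.sub (memLp_const 1)
  have hkmem : MemLp k 2 Q :=
    (memLp_indicator_const 2 hA (1:ℝ) (Or.inr (measure_ne_top Q A))).sub (memLp_const q)
  have hq01 : 0 ≤ q := ENNReal.toReal_nonneg
  have hq1 : q ≤ 1 := by
    rw [hqdef]
    exact ENNReal.toReal_le_of_le_ofReal zero_le_one (by simpa using prob_le_one (μ := Q) (s := A))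
  have hpt : ∀ ω, h ω * k ω = A.indicator g ω - q * g ω - A.indicator (fun _ => (1:ℝ)) ω + q := by
    intro ω
    by_cases hω : ω ∈ A <;>
      simp [h, k, Set.indicator_of_mem, Set.indicator_of_notMem, hω] <;> ring
  have hiA : Integrable (A.indicator g) Q := hgint.indicator hA
  have hi1 : Integrable (A.indicator (fun _ => (1:ℝ))) Q := (integrable_const (1:ℝ)).indicator hA
  have hI_qg : Integrable (fun ω => q * g ω) Q := hgint.const_mul q
  have hI_sub1 : Integrable (fun ω => A.indicator g ω - q * g ω) Q := hiA.sub hI_qg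
  have hI_sub2 : Integrable
      (fun ω => A.indicator g ω - q * g ω - A.indicator (fun _ => (1:ℝ)) ω) Q := hI_sub1.sub hi1
  have hhk_int : Integrable (fun ω => h ω * k ω) Q := by
    refine (hI_sub2.add (integrable_const q)).congr (Filter.Eventually.of_forall fun ω => ?_)
    simp only [Pi.add_apply]
    exact (hpt ω).symm
  have hint1A : ∫ ω, A.indicator (fun _ => (1:ℝ)) ω ∂Q = q := by
    rw [integral_indicator hA]; simp [hqdef]; rfl
  have hintAg : ∫ ω, A.indicator g ω ∂Q = p := by rw [integral_indicator hA]; exact hgA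
  have hIhk : ∫ ω, h ω * k ω ∂Q = p - q := by
    rw [show (fun ω => h ω * k ω)
        = fun ω => A.indicator g ω - q * g ω - A.indicator (fun _ => (1:ℝ)) ω + q
      from funext hpt]
    rw [integral_add hI_sub2 (integrable_const q), integral_sub hI_sub1 hi1,
      integral_sub hiA hI_qg, integral_const_mul, hgone, hintAg, hint1A, integral_const]
    simp
  have hh2int : Integrable (fun ω => h ω ^ 2) Q := hhmem.integrable_sq
  have hIg2 : ∫ ω, g ω ^ 2 ∂Q = (∫⁻ ω, f ω ^ 2 ∂Q).toReal := by
    rw [← integral_toReal ((hfm.pow_const 2).aemeasurable)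
      ((Measure.rnDeriv_lt_top P Q).mono fun ω hω => by
        simpa using ENNReal.pow_lt_top (n := 2) hω)]
    congr 1
    funext ω
    simp [g, ENNReal.toReal_pow]
  have hI_2g : Integrable (fun ω => 2 * g ω) Q := hgint.const_mul 2
  have hI_g2sub : Integrable (fun ω => g ω ^ 2 - 2 * g ω) Q := hg2.sub hI_2g
  have hIh2 : ∫ ω, h ω ^ 2 ∂Q = (∫ ω, g ω ^ 2 ∂Q) - 1 := by
    rw [show (fun ω => h ω ^ 2) = fun ω => g ω ^ 2 - 2 * g ω + 1
      from funext fun ω => by simp only [h]; ring]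
    rw [integral_add hI_g2sub (integrable_const 1), integral_sub hg2 hI_2g,
      integral_const_mul, hgone, integral_const]
    simp
    ring
  have hIg2_ge : (1:ℝ) ≤ ∫ ω, g ω ^ 2 ∂Q := by
    have h0 : 0 ≤ ∫ ω, h ω ^ 2 ∂Q := integral_nonneg fun ω => sq_nonneg _
    rw [hIh2] at h0; linarith
  have hchi : (chiSq P Q).toReal = ∫ ω, h ω ^ 2 ∂Q := by
    rw [chiSq, if_pos hPQ, ENNReal.toReal_sub_of_le ?hle hI, hIh2, hIg2]
    · simp
    case hle =>
      rw [← ENNReal.ofReal_one]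
      refine ENNReal.ofReal_le_of_le_toReal ?_
      rw [← hIg2]; exact hIg2_ge
  have hIk2 : ∫ ω, k ω ^ 2 ∂Q = q * (1 - q) := by
    rw [show (fun ω => k ω ^ 2)
        = fun ω => (1 - 2*q) * A.indicator (fun _ => (1:ℝ)) ω + q ^ 2
      from funext fun ω => by
        by_cases hω : ω ∈ A <;>
          simp [k, Set.indicator_of_mem, Set.indicator_of_notMem, hω] <;> ring]
    rw [integral_add (hi1.const_mul _) (integrable_const _), integral_const_mul, hint1A,
      integral_const]
    simp
    ring
  have hCS : ∀ (u v : Ω → ℝ), MemLp u 2 Q → MemLp v 2 Q → Integrable (fun ω => u ω * v ω) Q →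
      ∫ ω, u ω * v ω ∂Q ≤ Real.sqrt (∫ ω, u ω ^ 2 ∂Q) * Real.sqrt (∫ ω, v ω ^ 2 ∂Q) := by
    intro u v hu hv huv
    have h2 : MemLp u (ENNReal.ofReal 2) Q := by rwa [ENNReal.ofReal_ofNat]
    have h2' : MemLp v (ENNReal.ofReal 2) Q := by rwa [ENNReal.ofReal_ofNat]
    have hH := integral_mul_norm_le_Lp_mul_Lq (μ := Q) (E := ℝ)
      (Real.HolderConjugate.two_two : Real.HolderConjugate 2 2) h2 h2'
    have h1 : ∫ ω, u ω * v ω ∂Q ≤ ∫ ω, ‖u ω‖ * ‖v ω‖ ∂Q := by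
      refine integral_mono huv ?_ fun ω => ?_
      · refine huv.abs.congr (Filter.Eventually.of_forall fun ω => ?_)
        simp [abs_mul]
      · calc u ω * v ω ≤ |u ω * v ω| := le_abs_self _
          _ = ‖u ω‖ * ‖v ω‖ := by simp [abs_mul]
    refine h1.trans (hH.trans_eq ?_)
    have hn : ∀ (w : Ω → ℝ), (∫ ω, ‖w ω‖ ^ (2:ℝ) ∂Q) ^ ((1:ℝ)/2) = Real.sqrt (∫ ω, w ω ^ 2 ∂Q) := by
      intro w
      have he : (fun ω => ‖w ω‖ ^ (2:ℝ)) = fun ω => w ω ^ 2 := by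
        funext ω
        rw [show ((2:ℝ)) = ((2:ℕ):ℝ) by norm_num, Real.rpow_natCast]
        simp [sq_abs]
      rw [he, Real.sqrt_eq_rpow]
    rw [hn, hn]
  have hbound : ∀ (u : Ω → ℝ), MemLp u 2 Q → Integrable (fun ω => u ω * k ω) Q →
      (∫ ω, u ω * k ω ∂Q) ≤ Real.sqrt (∫ ω, u ω ^ 2 ∂Q) * Real.sqrt (q * (1-q)) := by
    intro u hu huk
    have := hCS u k hu hkmem huk
    rwa [hIk2] at this
  have h1 : p - q ≤ Real.sqrt ((chiSq P Q).toReal) * Real.sqrt (q * (1-q)) := by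
    have := hbound h hhmem hhk_int
    rwa [hIhk, ← hchi] at this
  have h2 : -(p - q) ≤ Real.sqrt ((chiSq P Q).toReal) * Real.sqrt (q * (1-q)) := by
    have hneg : Integrable (fun ω => (-h ω) * k ω) Q := by
      refine hhk_int.neg.congr (Filter.Eventually.of_forall fun ω => ?_)
      simp only [Pi.neg_apply]; ring
    have hb := hbound (fun ω => -h ω) hhmem.neg hneg
    have hInt : ∫ ω, (-h ω) * k ω ∂Q = -(p - q) := by
      rw [show (fun ω => (-h ω) * k ω) = fun ω => -(h ω * k ω)
        from funext fun ω => by ring]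
      rw [integral_neg, hIhk]
    rw [hInt] at hb
    have hsq : ∫ ω, (-h ω) ^ 2 ∂Q = ∫ ω, h ω ^ 2 ∂Q := by
      congr 1; funext ω; ring
    rwa [hsq, ← hchi] at hb
  rw [Real.sqrt_mul ENNReal.toReal_nonneg]
  exact abs_le.2 ⟨by linarith, h1⟩

lemma main {Ω : Type*} [MeasurableSpace Ω] (M : ℕ) (hM : 0 < M)
    (P Q : Fin M → Measure Ω)
    (hP : ∀ j, IsProbabilityMeasure (P j)) (hQ : ∀ j, IsProbabilityMeasure (Q j))
    (A : Fin M → Set Ω) (hA : ∀ j, MeasurableSet (A j))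
    (hq : (∑ j, ((Q j) (A j)).toReal) / M ∈ Set.Ioo (0:ℝ) 1) :
    ENNReal.ofReal ((∑ j, ((P j) (A j)).toReal) / M) ≤
      ENNReal.ofReal ((∑ j, ((Q j) (A j)).toReal) / M) +
        ((M : ℝ≥0∞)⁻¹ * (∑ j, chiSq (P j) (Q j)) *
          ENNReal.ofReal (((∑ j, ((Q j) (A j)).toReal) / M) *
            (1 - (∑ j, ((Q j) (A j)).toReal) / M))) ^ ((1:ℝ)/2) := by
  set qbar : ℝ := (∑ j, ((Q j) (A j)).toReal) / M with hqbar
  have hMR : (0:ℝ) < M := Nat.cast_pos.2 hM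
  have htpos : 0 < qbar * (1 - qbar) := mul_pos hq.1 (by linarith [hq.2])
  by_cases htop : ∃ j, chiSq (P j) (Q j) = ⊤
  · have hsum : (∑ j, chiSq (P j) (Q j)) = ⊤ :=
      ENNReal.sum_eq_top.2 (by simpa using htop)
    have hMne : ((M : ℝ≥0∞))⁻¹ ≠ 0 := by
      simp [ENNReal.inv_ne_zero]
    have hOne : ENNReal.ofReal (qbar * (1 - qbar)) ≠ 0 := by
      simp [ENNReal.ofReal_eq_zero, not_le, htpos]
    have : (M : ℝ≥0∞)⁻¹ * (∑ j, chiSq (P j) (Q j)) *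
        ENNReal.ofReal (qbar * (1 - qbar)) = ⊤ := by
      rw [hsum, ENNReal.mul_top hMne, ENNReal.top_mul hOne]
    rw [this, ENNReal.top_rpow_of_pos (by norm_num)]
    simp
  push_neg at htop
  have hac : ∀ j, P j ≪ Q j := by
    intro j
    by_contra hn
    exact htop j (by rw [chiSq, if_neg hn])
  haveI := hP; haveI := hQ
  set c : Fin M → ℝ := fun j => (chiSq (P j) (Q j)).toReal with hc
  set pj : Fin M → ℝ := fun j => ((P j) (A j)).toReal with hpj
  set qj : Fin M → ℝ := fun j => ((Q j) (A j)).toReal with hqj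
  set t : Fin M → ℝ := fun j => qj j * (1 - qj j) with ht
  have hkey : ∀ j, |pj j - qj j| ≤ Real.sqrt (c j * t j) := fun j =>
    key (P j) (Q j) (hac j) (htop j) (hA j)
  have hcnn : ∀ j, 0 ≤ c j := fun j => ENNReal.toReal_nonneg
  have hqj0 : ∀ j, 0 ≤ qj j := fun j => ENNReal.toReal_nonneg
  have hqj1 : ∀ j, qj j ≤ 1 := fun j =>
    ENNReal.toReal_le_of_le_ofReal zero_le_one
      (by simpa using prob_le_one (μ := Q j) (s := A j))
  have htnn : ∀ j, 0 ≤ t j := fun j => mul_nonneg (hqj0 j) (by linarith [hqj1 j])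
  -- real inequality
  have hreal : (∑ j, pj j) / M ≤ qbar + Real.sqrt (((∑ j, c j) / M) * (qbar * (1 - qbar))) := by
    have hsqrt_nn : 0 ≤ Real.sqrt (((∑ j, c j) / M) * (qbar * (1 - qbar))) := Real.sqrt_nonneg _
    rcases le_or_gt ((∑ j, pj j) / M) qbar with hle | hlt
    · linarith
    -- Σ (p - q) bound
    have hsum1 : ∑ j, (pj j - qj j) ≤ Real.sqrt (∑ j, c j) * Real.sqrt (∑ j, t j) := by
      calc ∑ j, (pj j - qj j) ≤ ∑ j, Real.sqrt (c j) * Real.sqrt (t j) := by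
            refine Finset.sum_le_sum fun j _ => ?_
            have := (hkey j)
            rw [Real.sqrt_mul (hcnn j)] at this
            exact (le_abs_self _).trans this
        _ ≤ Real.sqrt (∑ j, c j) * Real.sqrt (∑ j, t j) :=
            Real.sum_sqrt_mul_sqrt_le _ (fun j => hcnn j) (fun j => htnn j)
    have hsumt : ∑ j, t j ≤ M * (qbar * (1 - qbar)) := by
      have hcs : (∑ j, qj j) ^ 2 ≤ (M:ℝ) * ∑ j, qj j ^ 2 := by
        simpa using sq_sum_le_card_mul_sum_sq (s := (Finset.univ : Finset (Fin M))) (f := qj)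
      have hexp : ∑ j, t j = (∑ j, qj j) - ∑ j, qj j ^ 2 := by
        rw [← Finset.sum_sub_distrib]
        refine Finset.sum_congr rfl fun j _ => ?_
        ring
      have hqbarM : (∑ j, qj j) = M * qbar := by
        rw [hqbar]; field_simp
      rw [hexp, hqbarM]
      have h2 : (M * qbar)^2 ≤ (M:ℝ) * ∑ j, qj j ^ 2 := by rw [← hqbarM]; exact hcs
      nlinarith [hMR]
    have hA2 : 0 ≤ ∑ j, (pj j - qj j) := by
      have h1 : (∑ j, (pj j - qj j)) = (∑ j, pj j) - M * qbar := by
        rw [Finset.sum_sub_distrib, hqbar]; field_simp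
      have h2 : qbar * M < ∑ j, pj j := (lt_div_iff₀ hMR).mp hlt
      rw [h1]; nlinarith
    have hsq : (∑ j, (pj j - qj j))^2 ≤ (∑ j, c j) * (M * (qbar * (1 - qbar))) := by
      have h1 : (∑ j, (pj j - qj j))^2 ≤ (Real.sqrt (∑ j, c j) * Real.sqrt (∑ j, t j))^2 := by
        have hrhs : 0 ≤ Real.sqrt (∑ j, c j) * Real.sqrt (∑ j, t j) :=
          mul_nonneg (Real.sqrt_nonneg _) (Real.sqrt_nonneg _)
        exact pow_le_pow_left₀ hA2 hsum1 2 |>.trans le_rfl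
      have h2 : (Real.sqrt (∑ j, c j) * Real.sqrt (∑ j, t j))^2 = (∑ j, c j) * (∑ j, t j) := by
        rw [mul_pow, Real.sq_sqrt (Finset.sum_nonneg fun j _ => hcnn j),
          Real.sq_sqrt (Finset.sum_nonneg fun j _ => htnn j)]
      have h3 : (∑ j, c j) * (∑ j, t j) ≤ (∑ j, c j) * (M * (qbar * (1 - qbar))) :=
        mul_le_mul_of_nonneg_left hsumt (Finset.sum_nonneg fun j _ => hcnn j)
      linarith
    -- conclude
    rw [← sub_le_iff_le_add']
    rw [show (∑ j, pj j) / M - qbar = (∑ j, (pj j - qj j)) / M by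
      rw [Finset.sum_sub_distrib, hqbar]; field_simp]
    rw [Real.le_sqrt (div_nonneg hA2 hMR.le)
      (mul_nonneg (div_nonneg (Finset.sum_nonneg fun j _ => hcnn j) hMR.le) htpos.le)]
    rw [div_pow]
    rw [div_le_iff₀ (by positivity)]
    calc (∑ j, (pj j - qj j))^2 ≤ (∑ j, c j) * (M * (qbar * (1 - qbar))) := hsq
      _ = (∑ j, c j) / M * (qbar * (1 - qbar)) * (M:ℝ)^2 := by field_simp
  -- transfer to ℝ≥0∞
  have hofc : ENNReal.ofReal ((∑ j, c j) / M) = (M : ℝ≥0∞)⁻¹ * (∑ j, chiSq (P j) (Q j)) := by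
    rw [div_eq_mul_inv, ENNReal.ofReal_mul' (by positivity)]
    rw [ENNReal.ofReal_sum_of_nonneg (fun j _ => hcnn j)]
    have h1 : ∀ j, ENNReal.ofReal (c j) = chiSq (P j) (Q j) := fun j =>
      ENNReal.ofReal_toReal (htop j)
    rw [Finset.sum_congr rfl fun j _ => h1 j]
    rw [ENNReal.ofReal_inv_of_pos hMR, ENNReal.ofReal_natCast]
    ring
  calc ENNReal.ofReal ((∑ j, pj j) / M)
      ≤ ENNReal.ofReal (qbar + Real.sqrt (((∑ j, c j) / M) * (qbar * (1 - qbar)))) :=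
        ENNReal.ofReal_le_ofReal hreal
    _ = ENNReal.ofReal qbar
        + ENNReal.ofReal (Real.sqrt (((∑ j, c j) / M) * (qbar * (1 - qbar)))) := by
        rw [ENNReal.ofReal_add (le_of_lt hq.1) (Real.sqrt_nonneg _)]
    _ = ENNReal.ofReal qbar + ((M : ℝ≥0∞)⁻¹ * (∑ j, chiSq (P j) (Q j)) *
          ENNReal.ofReal (qbar * (1 - qbar))) ^ ((1:ℝ)/2) := by
        congr 1
        have hbase : ENNReal.ofReal (((∑ j, c j) / M) * (qbar * (1 - qbar)))
            = (M : ℝ≥0∞)⁻¹ * (∑ j, chiSq (P j) (Q j)) * ENNReal.ofReal (qbar * (1 - qbar)) := by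
          rw [ENNReal.ofReal_mul (div_nonneg (Finset.sum_nonneg fun j _ => hcnn j) hMR.le), hofc]
        rw [← hbase, Real.sqrt_eq_rpow,
          ← ENNReal.ofReal_rpow_of_nonneg
            (mul_nonneg (div_nonneg (Finset.sum_nonneg fun j _ => hcnn j) hMR.le) htpos.le)
            (by norm_num : (0:ℝ) ≤ 1/2)]

/-- **Lemma 7.6** (Fano's lemma for `χ²`-divergences). -/
theorem stmt19 {Ω : Type*} [MeasurableSpace Ω] (M : ℕ) (hM : 0 < M)
    (P Q : Fin M → Measure Ω)
    (hP : ∀ j, IsProbabilityMeasure (P j)) (hQ : ∀ j, IsProbabilityMeasure (Q j))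
    (A : Fin M → Set Ω) (hA : ∀ j, MeasurableSet (A j)) :
    ((∑ j, ((Q j) (A j)).toReal) / M ∈ Set.Ioo (0:ℝ) 1 →
      ENNReal.ofReal ((∑ j, ((P j) (A j)).toReal) / M) ≤
        ENNReal.ofReal ((∑ j, ((Q j) (A j)).toReal) / M) +
          ((M : ℝ≥0∞)⁻¹ * (∑ j, chiSq (P j) (Q j)) *
            ENNReal.ofReal (((∑ j, ((Q j) (A j)).toReal) / M) *
              (1 - (∑ j, ((Q j) (A j)).toReal) / M))) ^ ((1:ℝ)/2)) ∧
    (2 ≤ M → Pairwise (Function.onFun Disjoint A) → (⋃ j, A j) = Set.univ →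
      ENNReal.ofReal ((∑ j, ((P j) (A j)).toReal) / M) ≤
        ENNReal.ofReal (1 / M) +
          (⨅ (ν : Measure Ω) (_ : IsProbabilityMeasure ν),
            (M : ℝ≥0∞)⁻¹ * (∑ j, chiSq (P j) ν) *
              ENNReal.ofReal ((1 / M) * (1 - 1 / M))) ^ ((1:ℝ)/2)) := by
  refine ⟨fun hq => main M hM P Q hP hQ A hA hq, fun hM2 hdisj hcover => ?_⟩
  have hMR : (0:ℝ) < M := Nat.cast_pos.2 hM
  have hM1 : (1:ℝ) < M := by
    have : (2:ℝ) ≤ M := by exact_mod_cast hM2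
    linarith
  set pbar : ℝ := (∑ j, ((P j) (A j)).toReal) / M with hpbar
  have hstep : ∀ (ν : Measure Ω), IsProbabilityMeasure ν →
      ENNReal.ofReal pbar ≤ ENNReal.ofReal (1 / (M:ℝ)) +
        ((M : ℝ≥0∞)⁻¹ * (∑ j, chiSq (P j) ν) *
          ENNReal.ofReal ((1 / (M:ℝ)) * (1 - 1 / (M:ℝ)))) ^ ((1:ℝ)/2) := by
    intro ν hν
    have hsum : (∑ j, (ν (A j)).toReal) = 1 := by
      have h1 : ν (⋃ j, A j) = ∑' j, ν (A j) := measure_iUnion hdisj hA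
      rw [hcover, tsum_fintype] at h1
      have h2 : (∑ j, ν (A j)) = 1 := by rw [← h1, measure_univ]
      rw [← ENNReal.toReal_sum (fun j _ => measure_ne_top ν _), h2, ENNReal.toReal_one]
    have hq' : (∑ j, (ν (A j)).toReal) / M ∈ Set.Ioo (0:ℝ) 1 := by
      rw [hsum]
      exact ⟨by positivity, (div_lt_one hMR).2 hM1⟩
    have := main M hM P (fun _ => ν) hP (fun _ => hν) A hA hq'
    rw [hsum] at this
    exact this
  refine tsub_le_iff_left.1 ?_
  set X := ENNReal.ofReal pbar - ENNReal.ofReal (1 / (M:ℝ)) with hX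
  have hX2 : X ^ (2:ℝ) ≤ ⨅ (ν : Measure Ω) (_ : IsProbabilityMeasure ν),
      (M : ℝ≥0∞)⁻¹ * (∑ j, chiSq (P j) ν) *
        ENNReal.ofReal ((1 / (M:ℝ)) * (1 - 1 / (M:ℝ))) := by
    refine le_iInf fun ν => le_iInf fun hν => ?_
    have h1 : X ≤ ((M : ℝ≥0∞)⁻¹ * (∑ j, chiSq (P j) ν) *
        ENNReal.ofReal ((1 / (M:ℝ)) * (1 - 1 / (M:ℝ)))) ^ ((1:ℝ)/2) :=
      tsub_le_iff_left.2 (hstep ν hν)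
    have h2 := ENNReal.rpow_le_rpow h1 (by norm_num : (0:ℝ) ≤ 2)
    rwa [← ENNReal.rpow_mul, show ((1:ℝ)/2) * 2 = 1 by norm_num, ENNReal.rpow_one] at h2
  calc X = (X ^ (2:ℝ)) ^ ((1:ℝ)/2) := by
        rw [← ENNReal.rpow_mul, show (2:ℝ) * (1/2) = 1 by norm_num, ENNReal.rpow_one]
    _ ≤ _ := ENNReal.rpow_le_rpow hX2 (by norm_num)


end
end
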